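/- arXiv:2210.00567 — 4 statements merged into one kernel-verified Lean document; each statement's English description precedes it below -/
import Mathlib

section
/- If a finite configuration of points on the integer grid is asymmetric (admits no nontrivial symmetry of its smallest enclosing rectangle mapping the configuration to itself), then among the binary strings associated with the corners of its smallest enclosing rectangle (four strings if the rectangle is non-square, eight if square), there is a unique lexicographically largest string. -/
namespace RobotGrid

/-- Lexicographic strictly-greater on binary strings of length `L`
(encoded as functions `ℕ → Bool`, `true` = occupied = 1 > 0 = `false`). -/
def LexGT (L : ℕ) (s t : ℕ → Bool) : Prop :=
  ∃ i, i < L ∧ (∀ k, k < i → s k = t k) ∧ t i = false ∧ s i = true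

/-- Grid points of the rectangle with corners `A=(0,0)`, `B=(n-1,0)`,
`C=(n-1,m-1)`, `D=(0,m-1)`. -/
def inRect (n m : ℕ) (p : ℤ × ℤ) : Prop :=
  0 ≤ p.1 ∧ p.1 < (n : ℤ) ∧ 0 ≤ p.2 ∧ p.2 < (m : ℤ)

/-- `R = [0,n-1] × [0,m-1]` is the smallest enclosing rectangle of `C`:
it contains `C` and `C` touches all four sides. -/
def IsSER (C : Finset (ℤ × ℤ)) (n m : ℕ) : Prop :=
  (∀ p ∈ C, inRect n m p) ∧ (∃ p ∈ C, p.1 = 0) ∧ (∃ p ∈ C, p.1 = (n : ℤ) - 1) ∧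
    (∃ p ∈ C, p.2 = 0) ∧ (∃ p ∈ C, p.2 = (m : ℤ) - 1)

/-- The binary string `λ_{AB}`: scan from `A` along `AB` (row `y = 0`),
then successive rows upwards. -/
def lamAB (C : Finset (ℤ × ℤ)) (n : ℕ) : ℕ → Bool :=
  fun q => decide ((((q % n : ℕ) : ℤ), ((q / n : ℕ) : ℤ)) ∈ C)

def lamBA (C : Finset (ℤ × ℤ)) (n : ℕ) : ℕ → Bool :=
  fun q => decide ((((n - 1 - q % n : ℕ) : ℤ), ((q / n : ℕ) : ℤ)) ∈ C)

def lamDC (C : Finset (ℤ × ℤ)) (n m : ℕ) : ℕ → Bool :=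
  fun q => decide ((((q % n : ℕ) : ℤ), ((m - 1 - q / n : ℕ) : ℤ)) ∈ C)

def lamCD (C : Finset (ℤ × ℤ)) (n m : ℕ) : ℕ → Bool :=
  fun q => decide ((((n - 1 - q % n : ℕ) : ℤ), ((m - 1 - q / n : ℕ) : ℤ)) ∈ C)

/-- Scans along the vertical sides (used when the rectangle is a square). -/
def lamAD (C : Finset (ℤ × ℤ)) (m : ℕ) : ℕ → Bool :=
  fun q => decide ((((q / m : ℕ) : ℤ), ((q % m : ℕ) : ℤ)) ∈ C)

def lamDA (C : Finset (ℤ × ℤ)) (m : ℕ) : ℕ → Bool :=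
  fun q => decide ((((q / m : ℕ) : ℤ), ((m - 1 - q % m : ℕ) : ℤ)) ∈ C)

def lamBC (C : Finset (ℤ × ℤ)) (n m : ℕ) : ℕ → Bool :=
  fun q => decide ((((n - 1 - q / m : ℕ) : ℤ), ((q % m : ℕ) : ℤ)) ∈ C)

def lamCB (C : Finset (ℤ × ℤ)) (n m : ℕ) : ℕ → Bool :=
  fun q => decide ((((n - 1 - q / m : ℕ) : ℤ), ((m - 1 - q % m : ℕ) : ℤ)) ∈ C)

/-- Squared Euclidean distance on the grid. -/
def sqdist (p q : ℤ × ℤ) : ℤ := (p.1 - q.1) ^ 2 + (p.2 - q.2) ^ 2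

/-- A symmetry of the configuration `C` with smallest enclosing rectangle
`[0,n-1] × [0,m-1]`: an isometry of the grid mapping the grid points of the
rectangle to itself and `C` to itself. -/
def IsSymmetry (n m : ℕ) (C : Finset (ℤ × ℤ)) (f : ℤ × ℤ → ℤ × ℤ) : Prop :=
  Function.Bijective f ∧ (∀ p q, sqdist (f p) (f q) = sqdist p q) ∧
    (∀ p, inRect n m p ↔ inRect n m (f p)) ∧ (∀ p, p ∈ C ↔ f p ∈ C)

/-- `C` is asymmetric: every symmetry fixes the rectangle pointwise. -/
def Asymmetric (n m : ℕ) (C : Finset (ℤ × ℤ)) : Prop :=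
  ∀ f, IsSymmetry n m C f → ∀ p, inRect n m p → f p = p

/-- The point of the rectangle occurring at position `k` in the `λ_{AB}` scan. -/
def scanPos (n k : ℕ) : ℤ × ℤ := (((k % n : ℕ) : ℤ), ((k / n : ℕ) : ℤ))

/-! ### dihedral maps -/

def ap (n m : ℕ) (g : Bool × Bool × Bool) (p : ℤ × ℤ) : ℤ × ℤ :=
  ((if g.2.1 then (n : ℤ) - 1 - (if g.1 then p.2 else p.1) else (if g.1 then p.2 else p.1)),
   (if g.2.2 then (m : ℤ) - 1 - (if g.1 then p.1 else p.2) else (if g.1 then p.1 else p.2)))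

def ginv (g : Bool × Bool × Bool) : Bool × Bool × Bool :=
  if g.1 then (true, g.2.2, g.2.1) else g

lemma ginv_fst (g : Bool × Bool × Bool) : (ginv g).1 = g.1 := by
  obtain ⟨a, b, c⟩ := g; cases a <;> simp [ginv]

lemma ap_ginv_ap {n m : ℕ} {g : Bool × Bool × Bool} (hg : g.1 = true → (n : ℤ) = m)
    (p : ℤ × ℤ) : ap n m (ginv g) (ap n m g p) = p := by
  obtain ⟨a, b, c⟩ := g
  cases a <;> cases b <;> cases c <;> simp_all [ap, ginv, Prod.ext_iff]

lemma ap_ap_ginv {n m : ℕ} {g : Bool × Bool × Bool} (hg : g.1 = true → (n : ℤ) = m)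
    (p : ℤ × ℤ) : ap n m g (ap n m (ginv g) p) = p := by
  obtain ⟨a, b, c⟩ := g
  cases a <;> cases b <;> cases c <;> simp_all [ap, ginv, Prod.ext_iff]

lemma sqdist_ap (n m : ℕ) (g : Bool × Bool × Bool) (p q : ℤ × ℤ) :
    sqdist (ap n m g p) (ap n m g q) = sqdist p q := by
  obtain ⟨a, b, c⟩ := g
  cases a <;> cases b <;> cases c <;> simp [ap, sqdist] <;> ring

lemma inRect_ap {n m : ℕ} {g : Bool × Bool × Bool} (hg : g.1 = true → (n : ℤ) = m)
    (p : ℤ × ℤ) : inRect n m p ↔ inRect n m (ap n m g p) := by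
  obtain ⟨a, b, c⟩ := g
  cases a <;> cases b <;> cases c <;> simp_all [ap, inRect] <;> omega

lemma ap_inj_pts {n m : ℕ} (hn : 1 < n) (hm : 1 < m)
    {gi gj : Bool × Bool × Bool} (hgi : gi.1 = true → (n : ℤ) = m) (hgj : gj.1 = true → (n : ℤ) = m)
    (h0 : ap n m gi (0, 0) = ap n m gj (0, 0)) (h1 : ap n m gi (0, 1) = ap n m gj (0, 1)) :
    gi = gj := by
  obtain ⟨a, b, c⟩ := gi; obtain ⟨d, e, f⟩ := gj
  cases a <;> cases d <;>
    [skip; (have h2 := hgj rfl); (have h2 := hgi rfl); (have h2 := hgi rfl)] <;>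
  cases b <;> cases c <;> cases e <;> cases f <;>
    simp only [ap, Prod.ext_iff, Prod.mk.injEq, if_true, Bool.false_eq_true, if_false,
      ite_true, ite_false] at h0 h1 <;>
    simp only [Prod.mk.injEq, true_and, and_true, Bool.true_eq_false, Bool.false_eq_true,
      and_self, eq_self_iff_true] <;>
    omega

/-! ### canonical strings -/

def canon (C : Finset (ℤ × ℤ)) (n m : ℕ) (g : Bool × Bool × Bool) : ℕ → Bool :=
  fun q => decide (ap n m g (((q % n : ℕ) : ℤ), ((q / n : ℕ) : ℤ)) ∈ C)

lemma canon_ne (C : Finset (ℤ × ℤ)) {n m : ℕ} (hn : 1 < n) (hm : 1 < m)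
    (hser : IsSER C n m) (hasym : Asymmetric n m C)
    {gi gj : Bool × Bool × Bool}
    (hgi : gi.1 = true → (n : ℤ) = m) (hgj : gj.1 = true → (n : ℤ) = m)
    (hne : gi ≠ gj) :
    ∃ k, k < n * m ∧ canon C n m gi k ≠ canon C n m gj k := by
  by_contra hcon
  push_neg at hcon
  -- equality on the rectangle
  have heq : ∀ p, inRect n m p → (ap n m gi p ∈ C ↔ ap n m gj p ∈ C) := by
    intro p hp
    obtain ⟨hx0, hxn, hy0, hym⟩ := hp
    have h1 : p.1.toNat < n := by omega
    have h2 : p.2.toNat < m := by omega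
    set q := p.1.toNat + n * p.2.toNat with hqdef
    have hq : q < n * m := by
      have h3 : q < n * (p.2.toNat + 1) := by
        rw [Nat.mul_succ, hqdef, Nat.add_comm]
        exact Nat.add_lt_add_left h1 _
      have h4 : n * (p.2.toNat + 1) ≤ n * m := Nat.mul_le_mul_left n h2
      omega
    have hmod : q % n = p.1.toNat := by
      rw [hqdef, Nat.add_mul_mod_self_left]; exact Nat.mod_eq_of_lt h1
    have hdiv : q / n = p.2.toNat := by
      rw [hqdef, Nat.add_mul_div_left _ _ (by omega : 0 < n), Nat.div_eq_of_lt h1, Nat.zero_add]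
    have hh := hcon q hq
    simp only [canon, hmod, hdiv] at hh
    have hpt : (((p.1.toNat : ℕ) : ℤ), ((p.2.toNat : ℕ) : ℤ)) = p := by
      rw [Prod.ext_iff]; constructor <;> simp <;> omega
    rw [hpt] at hh
    exact decide_eq_decide.mp hh
  have hgi' : (ginv gi).1 = true → (n : ℤ) = m := by rw [ginv_fst]; exact hgi
  set f := fun p => ap n m gj (ap n m (ginv gi) p) with hfdef
  have hrect : ∀ p, inRect n m p ↔ inRect n m (f p) :=
    fun p => (inRect_ap hgi' p).trans (inRect_ap hgj _)
  have hsym : IsSymmetry n m C f := by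
    refine ⟨?_, ?_, hrect, ?_⟩
    · rw [Function.bijective_iff_has_inverse]
      refine ⟨fun p => ap n m gi (ap n m (ginv gj) p), fun p => ?_, fun p => ?_⟩
      · show ap n m gi (ap n m (ginv gj) (ap n m gj (ap n m (ginv gi) p))) = p
        rw [ap_ginv_ap hgj, ap_ap_ginv hgi]
      · show ap n m gj (ap n m (ginv gi) (ap n m gi (ap n m (ginv gj) p))) = p
        rw [ap_ginv_ap hgi, ap_ap_ginv hgj]
    · intro p q
      show sqdist (ap n m gj _) (ap n m gj _) = _
      rw [sqdist_ap, sqdist_ap]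
    · intro p
      by_cases hp : inRect n m p
      · have hp' : inRect n m (ap n m (ginv gi) p) := (inRect_ap hgi' p).mp hp
        have := heq _ hp'
        rwa [ap_ap_ginv hgi] at this
      · constructor
        · intro h; exact absurd (hser.1 p h) hp
        · intro h; exact absurd (hser.1 _ h) (fun hh => hp ((hrect p).mpr hh))
  have hfix := hasym f hsym
  have hkey : ∀ p, inRect n m p → ap n m gj p = ap n m gi p := by
    intro p hp
    have h1 : inRect n m (ap n m gi p) := (inRect_ap hgi p).mp hp
    have h2 := hfix _ h1
    rw [hfdef] at h2
    simp only at h2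
    rwa [ap_ginv_ap hgi] at h2
  have hin0 : inRect n m ((0 : ℤ), (0 : ℤ)) := by simp [inRect]; omega
  have hin1 : inRect n m ((0 : ℤ), (1 : ℤ)) := by simp [inRect]; omega
  exact hne (ap_inj_pts hn hm hgi hgj (hkey _ hin0).symm (hkey _ hin1).symm)

def bkey (L : ℕ) (s : ℕ → Bool) : ℕ :=
  ∑ k ∈ Finset.range L, if s k then 2 ^ (L - 1 - k) else 0

lemma sum_two_pow (b : ℕ) : ∑ k ∈ Finset.range b, 2 ^ k = 2 ^ b - 1 := by
  induction b with
  | zero => simp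
  | succ b ih =>
    rw [Finset.sum_range_succ, ih, pow_succ]
    have h : 1 ≤ 2 ^ b := Nat.one_le_two_pow
    omega

lemma sum_pow_lt {L i : ℕ} (hi : i < L) :
    ∑ k ∈ Finset.Ico (i + 1) L, 2 ^ (L - 1 - k) < 2 ^ (L - 1 - i) := by
  rw [Finset.sum_Ico_eq_sum_range]
  have he : ∀ k ∈ Finset.range (L - (i + 1)), 2 ^ (L - 1 - (i + 1 + k)) =
      (fun j => 2 ^ j) ((L - (i + 1)) - 1 - k) := by
    intro k hk
    simp only [Finset.mem_range] at hk
    congr 1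
    omega
  rw [Finset.sum_congr rfl he, Finset.sum_range_reflect (fun j => 2 ^ j), sum_two_pow]
  have h1 : (2:ℕ) ^ (L - (i+1)) ≤ 2 ^ (L - 1 - i) := Nat.pow_le_pow_right (by omega) (by omega)
  have h2 : 1 ≤ (2:ℕ) ^ (L - (i+1)) := Nat.one_le_two_pow
  omega

lemma bkey_split {L i : ℕ} (hi : i < L) (u : ℕ → Bool) :
    bkey L u = (∑ k ∈ Finset.Ico 0 i, if u k then 2 ^ (L - 1 - k) else 0) +
      ((if u i then 2 ^ (L - 1 - i) else 0) +
        ∑ k ∈ Finset.Ico (i + 1) L, if u k then 2 ^ (L - 1 - k) else 0) := by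
  rw [bkey, Finset.range_eq_Ico,
    ← Finset.sum_Ico_consecutive _ (Nat.zero_le i) hi.le,
    Finset.sum_eq_sum_Ico_succ_bot hi]

lemma bkey_lt {L i : ℕ} {s t : ℕ → Bool} (hi : i < L)
    (hagree : ∀ k, k < i → s k = t k) (hs : s i = false) (ht : t i = true) :
    bkey L s < bkey L t := by
  rw [bkey_split hi s, bkey_split hi t, hs, ht]
  simp only [if_true, Bool.false_eq_true, if_false]
  have e1 : (∑ k ∈ Finset.Ico 0 i, if s k then 2 ^ (L - 1 - k) else 0) =
      ∑ k ∈ Finset.Ico 0 i, if t k then 2 ^ (L - 1 - k) else 0 :=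
    Finset.sum_congr rfl fun k hk => by
      rw [hagree k (Finset.mem_Ico.mp hk).2]
  have e2 : (∑ k ∈ Finset.Ico (i + 1) L, if s k then 2 ^ (L - 1 - k) else 0) ≤
      ∑ k ∈ Finset.Ico (i + 1) L, 2 ^ (L - 1 - k) :=
    Finset.sum_le_sum fun k _ => by split <;> simp
  have e3 := sum_pow_lt hi
  linarith [Nat.zero_le (∑ k ∈ Finset.Ico (i + 1) L, if t k then 2 ^ (L - 1 - k) else 0)]

lemma bkey_window {L : ℕ} {s t : ℕ → Bool} (h : ∀ k, k < L → s k = t k) :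
    bkey L s = bkey L t :=
  Finset.sum_congr rfl fun k hk => by rw [h k (Finset.mem_range.mp hk)]

lemma exists_least_diff {L : ℕ} {s t : ℕ → Bool} (hex : ∃ k, k < L ∧ s k ≠ t k) :
    ∃ i, i < L ∧ (∀ k, k < i → s k = t k) ∧ s i ≠ t i := by
  classical
  refine ⟨Nat.find hex, (Nat.find_spec hex).1, ?_, (Nat.find_spec hex).2⟩
  intro k hk
  by_contra hc
  exact Nat.find_min hex hk ⟨hk.trans (Nat.find_spec hex).1, hc⟩

lemma bkey_ne {L : ℕ} {s t : ℕ → Bool} (hex : ∃ k, k < L ∧ s k ≠ t k) :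
    bkey L s ≠ bkey L t := by
  obtain ⟨i, hiL, hagree, hne⟩ := exists_least_diff hex
  cases hsb : s i with
  | false =>
    have ht : t i = true := by cases htb : t i <;> simp_all
    exact Nat.ne_of_lt (bkey_lt hiL hagree hsb ht)
  | true =>
    have ht : t i = false := by cases htb : t i <;> simp_all
    exact Nat.ne_of_gt (bkey_lt hiL (fun k hk => (hagree k hk).symm) ht hsb)

lemma lexgt_of_bkey_lt {L : ℕ} {s t : ℕ → Bool} (h : bkey L t < bkey L s) :
    LexGT L s t := by
  have hex : ∃ k, k < L ∧ s k ≠ t k := by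
    by_contra hc
    push_neg at hc
    exact absurd (bkey_window hc) (Nat.ne_of_gt h)
  obtain ⟨i, hiL, hagree, hne⟩ := exists_least_diff hex
  cases hsb : s i with
  | false =>
    have ht : t i = true := by cases htb : t i <;> simp_all
    exact absurd (bkey_lt hiL hagree hsb ht) (by omega)
  | true =>
    have ht : t i = false := by cases htb : t i <;> simp_all
    exact ⟨i, hiL, hagree, ht, hsb⟩

/-! ### lam = canon on the scan window -/

lemma cast_sub_one {n a : ℕ} (h : a < n) :
    ((n - 1 - a : ℕ) : ℤ) = (n : ℤ) - 1 - (a : ℤ) := by omega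

lemma mod_div_lt {n m k : ℕ} (hn : 0 < n) (hk : k < n * m) :
    k % n < n ∧ k / n < m :=
  ⟨Nat.mod_lt _ hn, (Nat.div_lt_iff_lt_mul hn).mpr (by rw [Nat.mul_comm] at hk; exact hk)⟩

lemma lamAB_eq (C : Finset (ℤ × ℤ)) {n m k : ℕ} (hn : 0 < n) (hk : k < n * m) :
    lamAB C n k = canon C n m (false, false, false) k := by
  simp [lamAB, canon, ap]

lemma lamBA_eq (C : Finset (ℤ × ℤ)) {n m k : ℕ} (hn : 0 < n) (hk : k < n * m) :
    lamBA C n k = canon C n m (false, true, false) k := by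
  obtain ⟨h1, h2⟩ := mod_div_lt hn hk
  simp [lamBA, canon, ap, cast_sub_one h1]

lemma lamDC_eq (C : Finset (ℤ × ℤ)) {n m k : ℕ} (hn : 0 < n) (hk : k < n * m) :
    lamDC C n m k = canon C n m (false, false, true) k := by
  obtain ⟨h1, h2⟩ := mod_div_lt hn hk
  simp [lamDC, canon, ap, cast_sub_one h2]

lemma lamCD_eq (C : Finset (ℤ × ℤ)) {n m k : ℕ} (hn : 0 < n) (hk : k < n * m) :
    lamCD C n m k = canon C n m (false, true, true) k := by
  obtain ⟨h1, h2⟩ := mod_div_lt hn hk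
  simp [lamCD, canon, ap, cast_sub_one h1, cast_sub_one h2]

lemma lamAD_eq (C : Finset (ℤ × ℤ)) {n k : ℕ} (hn : 0 < n) (hk : k < n * n) :
    lamAD C n k = canon C n n (true, false, false) k := by
  simp [lamAD, canon, ap]

lemma lamDA_eq (C : Finset (ℤ × ℤ)) {n k : ℕ} (hn : 0 < n) (hk : k < n * n) :
    lamDA C n k = canon C n n (true, false, true) k := by
  obtain ⟨h1, h2⟩ := mod_div_lt hn hk
  simp [lamDA, canon, ap, cast_sub_one h1]

lemma lamBC_eq (C : Finset (ℤ × ℤ)) {n k : ℕ} (hn : 0 < n) (hk : k < n * n) :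
    lamBC C n n k = canon C n n (true, true, false) k := by
  obtain ⟨h1, h2⟩ := mod_div_lt hn hk
  simp [lamBC, canon, ap, cast_sub_one h2]

lemma lamCB_eq (C : Finset (ℤ × ℤ)) {n k : ℕ} (hn : 0 < n) (hk : k < n * n) :
    lamCB C n n k = canon C n n (true, true, true) k := by
  obtain ⟨h1, h2⟩ := mod_div_lt hn hk
  simp [lamCB, canon, ap, cast_sub_one h1, cast_sub_one h2]

/-! ### the main auxiliary lemma -/

lemma main_aux (C : Finset (ℤ × ℤ)) {n m : ℕ} (hn : 1 < n) (hm : 1 < m)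
    (hser : IsSER C n m) (hasym : Asymmetric n m C)
    {len : ℕ} (gs : Fin len → Bool × Bool × Bool) (ls : Fin len → (ℕ → Bool))
    (hlen : 0 < len)
    (hg : ∀ i, (gs i).1 = true → (n : ℤ) = m)
    (hinj : Function.Injective gs)
    (hcanon : ∀ i k, k < n * m → ls i k = canon C n m (gs i) k) :
    ∃ i : Fin len, ∀ j : Fin len, j ≠ i → LexGT (n * m) (ls i) (ls j) := by
  obtain ⟨i, -, hmax⟩ := Finset.exists_max_image Finset.univ
    (fun i => bkey (n * m) (ls i)) ⟨⟨0, hlen⟩, Finset.mem_univ _⟩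
  refine ⟨i, fun j hj => ?_⟩
  have hgne : gs i ≠ gs j := fun h => hj (hinj h).symm
  obtain ⟨k, hk, hkne⟩ := canon_ne C hn hm hser hasym (hg i) (hg j) hgne
  have hbne : bkey (n * m) (ls j) ≠ bkey (n * m) (ls i) := by
    apply bkey_ne
    exact ⟨k, hk, by rw [hcanon i k hk, hcanon j k hk]; exact fun h => hkne h.symm⟩
  exact lexgt_of_bkey_lt (lt_of_le_of_ne (hmax j (Finset.mem_univ _)) hbne)

/-- if a configuration is asymmetric, then among the corner
strings of its smallest enclosing rectangle (four if the rectangle is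
non-square, eight if it is a square) there is a unique lexicographically
largest one. -/
theorem unique_largest_corner_string_of_asymmetric
    (C : Finset (ℤ × ℤ)) (n m : ℕ) (hn : 1 < n) (hnm : n ≤ m)
    (hser : IsSER C n m) (hasym : Asymmetric n m C) :
    ∃ L : List (ℕ → Bool),
      (L = if n = m then
          [lamAB C n, lamBA C n, lamDC C n m, lamCD C n m,
            lamAD C m, lamDA C m, lamBC C n m, lamCB C n m]
        else [lamAB C n, lamBA C n, lamDC C n m, lamCD C n m]) ∧
      ∃ i : Fin L.length, ∀ j : Fin L.length, j ≠ i →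
        LexGT (n * m) (L.get i) (L.get j) := by
  have hmpos : 1 < m := lt_of_lt_of_le hn hnm
  by_cases hsq : n = m
  · subst hsq
    refine ⟨[lamAB C n, lamBA C n, lamDC C n n, lamCD C n n,
        lamAD C n, lamDA C n, lamBC C n n, lamCB C n n], by simp, ?_⟩
    refine main_aux C hn hn hser hasym
      (gs := ![(false, false, false), (false, true, false), (false, false, true),
        (false, true, true), (true, false, false), (true, false, true),
        (true, true, false), (true, true, true)])
      _ (by norm_num) (fun i _ => rfl) (by decide) ?_
    intro i k hk
    fin_cases i
    · exact lamAB_eq C (by omega) hk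
    · exact lamBA_eq C (by omega) hk
    · exact lamDC_eq C (by omega) hk
    · exact lamCD_eq C (by omega) hk
    · exact lamAD_eq C (by omega) hk
    · exact lamDA_eq C (by omega) hk
    · exact lamBC_eq C (by omega) hk
    · exact lamCB_eq C (by omega) hk
  · refine ⟨[lamAB C n, lamBA C n, lamDC C n m, lamCD C n m], by simp [hsq], ?_⟩
    refine main_aux C hn hmpos hser hasym
      (gs := ![(false, false, false), (false, true, false), (false, false, true),
        (false, true, true)])
      _ (by norm_num) (fun i => by fin_cases i <;> simp) (by decide) ?_
    intro i k hk
    fin_cases i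
    · exact lamAB_eq C (by omega) hk
    · exact lamBA_eq C (by omega) hk
    · exact lamDC_eq C (by omega) hk
    · exact lamCD_eq C (by omega) hk

end RobotGrid
end

section
/- Let C be an asymmetric configuration with smallest enclosing rectangle ABCD of dimensions m × n with m > n > 1 (|AB| = n), where λ_{AB} is the unique lexicographically largest corner string, and let r be the tail (the point of C realizing the last 1 in λ_{AB}, lying on side CD). If r moves one grid step in the direction away from AB (increasing the rectangle to ABC'D' of dimensions (m+1) × n), then in the new configuration λ'_{AB} > λ'_{BA}. -/
namespace RobotGrid

/-- in an asymmetric configuration with `λ_{AB}` the unique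
largest corner string (rectangle `m × n`, `m > n > 1`), after the tail (the
point realizing the last 1 of `λ_{AB}`, lying on the side `CD`, i.e. the top
row) moves one step away from `AB` (to the new row `y = m`), in the new
configuration `λ'_{AB} > λ'_{BA}`. -/
theorem tail_up_move_preserves_AB_gt_BA
    (C : Finset (ℤ × ℤ)) (n m : ℕ) (hn : 1 < n) (hnm : n < m)
    (hser : IsSER C n m) (hasym : Asymmetric n m C)
    (hBA : LexGT (n * m) (lamAB C n) (lamBA C n))
    (hDC : LexGT (n * m) (lamAB C n) (lamDC C n m))
    (hCD : LexGT (n * m) (lamAB C n) (lamCD C n m))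
    (r : ℤ × ℤ) (hr : r ∈ C) (hrow : r.2 = (m : ℤ) - 1)
    (htail : ∀ p ∈ C, p ≠ r → p.2 * n + p.1 < r.2 * n + r.1) :
    LexGT (n * (m + 1))
      (lamAB (insert (r.1, (m : ℤ)) (C.erase r)) n)
      (lamBA (insert (r.1, (m : ℤ)) (C.erase r)) n) := by

  classical
  obtain ⟨hmem, -⟩ := hser
  obtain ⟨hr1, hr2, hr3, hr4⟩ := hmem r hr
  obtain ⟨i, hiL, hag, hBAi, hABi⟩ := hBA
  have hn0 : 0 < n := by omega
  have hm0 : 1 ≤ m := by omega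
  set a := r.1.toNat with ha_def
  have ha : (a : ℤ) = r.1 := Int.toNat_of_nonneg hr1
  have han : a < n := by omega
  have hm1 : ((m - 1 : ℕ) : ℤ) = (m : ℤ) - 1 := by omega
  have hre : r = ((a : ℤ), (m : ℤ) - 1) := Prod.ext_iff.mpr ⟨ha.symm, hrow⟩
  have hprod : n * (m - 1) + n = n * m := by
    cases m with
    | zero => omega
    | succ k => simp [Nat.mul_succ]
  have e4 : n * (m + 1) = n * m + n := by ring
  -- generic mod/div computation
  have hmodgen : ∀ c b : ℕ, b < n → (n * c + b) % n = b ∧ (n * c + b) / n = c := by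
    intro c b hb
    refine ⟨?_, ?_⟩
    · rw [Nat.mul_add_mod, Nat.mod_eq_of_lt hb]
    · rw [Nat.mul_add_div hn0, Nat.div_eq_of_lt hb, add_zero]
  have huni : ∀ k : ℕ, k = n * (k / n) + k % n := fun k => (Nat.div_add_mod k n).symm
  have hmodlt : ∀ k : ℕ, k % n < n := fun k => Nat.mod_lt k hn0
  -- abbreviations
  have hC' : ∀ p : ℤ × ℤ, (p ∈ insert (r.1, (m : ℤ)) (C.erase r)) ↔
      (p = ((a : ℤ), (m : ℤ)) ∨ (p ∈ C ∧ p ≠ r)) := by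
    intro p
    simp only [Finset.mem_insert, Finset.mem_erase, ← ha]
    tauto
  have hCy : ∀ p ∈ C, p.2 < (m : ℤ) := fun p hp => (hmem p hp).2.2.2
  have htlt : n * (m - 1) + a < n * m := by omega
  have ht'lt : n * (m - 1) + (n - 1 - a) < n * m := by omega
  have hrowlt : ∀ k, k < n * m → k / n < m := fun k hk => Nat.div_lt_of_lt_mul hk
  -- L1 : away from t, the AB string is unchanged
  have L1 : ∀ k, k < n * m → k ≠ n * (m - 1) + a →
      lamAB (insert (r.1, (m : ℤ)) (C.erase r)) n k = lamAB C n k := by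
    intro k hk hkt
    have hdlt := hrowlt k hk
    simp only [lamAB, decide_eq_decide]
    rw [hC']
    constructor
    · rintro (hp | ⟨hp, -⟩)
      · have h2 : ((k / n : ℕ) : ℤ) = (m : ℤ) := congrArg Prod.snd hp
        omega
      · exact hp
    · intro hp
      refine Or.inr ⟨hp, fun hpr => hkt ?_⟩
      rw [hre] at hpr
      have h1 : ((k % n : ℕ) : ℤ) = (a : ℤ) := congrArg Prod.fst hpr
      have h2 : ((k / n : ℕ) : ℤ) = (m : ℤ) - 1 := congrArg Prod.snd hpr
      have e1 : k % n = a := by omega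
      have e2 : k / n = m - 1 := by omega
      have := huni k
      rw [e1, e2] at this
      omega
  -- L3 : away from t', the BA string is unchanged
  have L3 : ∀ k, k < n * m → k ≠ n * (m - 1) + (n - 1 - a) →
      lamBA (insert (r.1, (m : ℤ)) (C.erase r)) n k = lamBA C n k := by
    intro k hk hkt
    have hdlt := hrowlt k hk
    simp only [lamBA, decide_eq_decide]
    rw [hC']
    constructor
    · rintro (hp | ⟨hp, -⟩)
      · have h2 : ((k / n : ℕ) : ℤ) = (m : ℤ) := congrArg Prod.snd hp
        omega
      · exact hp
    · intro hp
      refine Or.inr ⟨hp, fun hpr => hkt ?_⟩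
      rw [hre] at hpr
      have h1 : ((n - 1 - k % n : ℕ) : ℤ) = (a : ℤ) := congrArg Prod.fst hpr
      have h2 : ((k / n : ℕ) : ℤ) = (m : ℤ) - 1 := congrArg Prod.snd hpr
      have hklt := hmodlt k
      have e1 : k % n = n - 1 - a := by omega
      have e2 : k / n = m - 1 := by omega
      have := huni k
      rw [e1, e2] at this
      omega
  -- L2 : the AB string is now false at t
  have L2 : lamAB (insert (r.1, (m : ℤ)) (C.erase r)) n (n * (m - 1) + a) = false := by
    obtain ⟨e1, e2⟩ := hmodgen (m - 1) a han
    simp only [lamAB, e1, e2, decide_eq_false_iff_not]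
    rw [hC']
    rintro (hp | ⟨-, hp⟩)
    · have h2 : ((m - 1 : ℕ) : ℤ) = (m : ℤ) := congrArg Prod.snd hp
      omega
    · exact hp (by rw [hre, hm1])
  -- L4 : the BA string is now false at t'
  have L4 : lamBA (insert (r.1, (m : ℤ)) (C.erase r)) n (n * (m - 1) + (n - 1 - a)) = false := by
    obtain ⟨e1, e2⟩ := hmodgen (m - 1) (n - 1 - a) (by omega)
    have e3 : n - 1 - (n - 1 - a) = a := by omega
    simp only [lamBA, e1, e2, e3, decide_eq_false_iff_not]
    rw [hC']
    rintro (hp | ⟨-, hp⟩)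
    · have h2 : ((m - 1 : ℕ) : ℤ) = (m : ℤ) := congrArg Prod.snd hp
      omega
    · exact hp (by rw [hre, hm1])
  -- M2 : the old BA string is true at t'
  have M2 : lamBA C n (n * (m - 1) + (n - 1 - a)) = true := by
    obtain ⟨e1, e2⟩ := hmodgen (m - 1) (n - 1 - a) (by omega)
    have e3 : n - 1 - (n - 1 - a) = a := by omega
    simp only [lamBA, e1, e2, e3, decide_eq_true_eq]
    have : (((a : ℕ) : ℤ), ((m - 1 : ℕ) : ℤ)) = r := by rw [hre, hm1]
    rw [this]; exact hr
  -- cast helpers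
  have hTz : ((n * (m - 1) : ℕ) : ℤ) = (n : ℤ) * ((m : ℤ) - 1) := by
    push_cast [hm1]
    ring
  -- N1 : t is the last position of a one in the old AB string
  have N1 : ∀ k, k < n * m → lamAB C n k = true → k ≤ n * (m - 1) + a := by
    intro k hk hkt
    simp only [lamAB, decide_eq_true_eq] at hkt
    by_cases hpr : ((((k % n : ℕ) : ℤ), ((k / n : ℕ) : ℤ)) : ℤ × ℤ) = r
    · rw [hre] at hpr
      have h1 : ((k % n : ℕ) : ℤ) = (a : ℤ) := congrArg Prod.fst hpr
      have h2 : ((k / n : ℕ) : ℤ) = (m : ℤ) - 1 := congrArg Prod.snd hpr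
      have e1 : k % n = a := by omega
      have e2 : k / n = m - 1 := by omega
      have := huni k
      rw [e1, e2] at this
      omega
    · have h := htail _ hkt hpr
      simp only at h
      rw [hrow, ← ha] at h
      have h2 : ((n : ℤ)) * ((k / n : ℕ) : ℤ) + ((k % n : ℕ) : ℤ) = (k : ℤ) := by
        exact_mod_cast congrArg (fun x : ℕ => (x : ℤ)) (Nat.div_add_mod k n)
      have h5 : (k : ℤ) < ((n * (m - 1) + a : ℕ) : ℤ) := by
        rw [Nat.cast_add, hTz]
        nlinarith [h, h2]
      omega
  have hit : i ≤ n * (m - 1) + a := N1 i hiL hABi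
  have hiNe : i ≠ n * (m - 1) + (n - 1 - a) := by
    intro h
    rw [h, M2] at hBAi
    simp at hBAi
  -- agreement chain below min
  have hagree' : ∀ k, k < i → k ≠ n * (m - 1) + a → k ≠ n * (m - 1) + (n - 1 - a) →
      lamAB (insert (r.1, (m : ℤ)) (C.erase r)) n k
        = lamBA (insert (r.1, (m : ℤ)) (C.erase r)) n k := by
    intro k hk hk1 hk2
    rw [L1 k (by omega) hk1, L3 k (by omega) hk2]
    exact hag k hk
  rcases lt_trichotomy (n * (m - 1) + (n - 1 - a)) i with hcase | hcase | hcase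
  · -- t' < i : witness t'
    refine ⟨n * (m - 1) + (n - 1 - a), by omega, ?_, L4, ?_⟩
    · intro k hk
      exact hagree' k (by omega) (by omega) (by omega)
    · rw [L1 _ (by omega) (by omega), hag _ hcase]
      exact M2
  · exact absurd hcase.symm hiNe
  · -- i < t'
    rcases eq_or_lt_of_le hit with hEq | hilt
    · -- i = t < t' : the hard case
      have hanlt : a < n - 1 - a := by omega
      have hdivrow : ∀ k, n * (m - 1) ≤ k → k < n * m →
          k / n = m - 1 ∧ k % n = k - n * (m - 1) := by
        intro k h1 h2
        have hd : k / n = m - 1 := by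
          refine Nat.div_eq_of_lt_le ?_ ?_
          · rw [Nat.mul_comm (m - 1) n]; exact h1
          · rw [show m - 1 + 1 = m from by omega, Nat.mul_comm m n]; exact h2
        have := huni k
        rw [hd] at this
        exact ⟨hd, by omega⟩
      have hdivm : ∀ k, n * m ≤ k → k < n * (m + 1) →
          k / n = m ∧ k % n = k - n * m := by
        intro k h1 h2
        have hd : k / n = m := by
          refine Nat.div_eq_of_lt_le ?_ ?_
          · rw [Nat.mul_comm m n]; exact h1
          · rw [Nat.mul_comm (m + 1) n]; exact h2
        have := huni k
        rw [hd] at this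
        exact ⟨hd, by omega⟩
      have P1 : ∀ k, n * (m - 1) + a < k → k < n * m →
          lamAB (insert (r.1, (m : ℤ)) (C.erase r)) n k = false := by
        intro k h1 h2
        rw [L1 k h2 (by omega)]
        rcases Bool.eq_false_or_eq_true (lamAB C n k) with hb | hb
        · exact absurd (N1 k h2 hb) (by omega)
        · exact hb
      have PmAB : ∀ k, n * m ≤ k → k < n * (m + 1) →
          (lamAB (insert (r.1, (m : ℤ)) (C.erase r)) n k = true ↔ k % n = a) := by
        intro k h1 h2
        obtain ⟨hd, -⟩ := hdivm k h1 h2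
        simp only [lamAB, hd, decide_eq_true_eq]
        rw [hC']
        constructor
        · rintro (hp | ⟨hp, -⟩)
          · have h3 := congrArg Prod.fst hp
            omega
          · have := hCy _ hp
            simp at this
        · intro hkm
          left
          rw [hkm]
      have PmBA : ∀ k, n * m ≤ k → k < n * (m + 1) →
          (lamBA (insert (r.1, (m : ℤ)) (C.erase r)) n k = true ↔ k % n = n - 1 - a) := by
        intro k h1 h2
        obtain ⟨hd, -⟩ := hdivm k h1 h2
        have hk5 := hmodlt k
        simp only [lamBA, hd, decide_eq_true_eq]
        rw [hC']
        constructor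
        · rintro (hp | ⟨hp, -⟩)
          · have h3 := congrArg Prod.fst hp
            omega
          · have := hCy _ hp
            simp at this
        · intro hkm
          left
          rw [hkm, show n - 1 - (n - 1 - a) = a from by omega]
      have P2 : ∀ k, n * (m - 1) + a < k → k < n * m → k ≠ n * (m - 1) + (n - 1 - a) →
          lamBA (insert (r.1, (m : ℤ)) (C.erase r)) n k = false := by
        intro k h1 h2 h3
        rw [L3 k h2 h3]
        obtain ⟨hd, hmk⟩ := hdivrow k (by omega) h2
        rcases Bool.eq_false_or_eq_true (lamBA C n k) with hb | hb
        swap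
        · exact hb
        exfalso
        simp only [lamBA, hd, decide_eq_true_eq] at hb
        set x := n - 1 - k % n with hx
        have hk5 := hmodlt k
        have hxa : x < a := by
          by_cases hpr : ((((x : ℕ) : ℤ), ((m - 1 : ℕ) : ℤ)) : ℤ × ℤ) = r
          · exfalso
            rw [hre] at hpr
            have e1' := congrArg Prod.fst hpr
            apply h3
            have := huni k
            rw [hd] at this
            omega
          · have h := htail _ hb hpr
            simp only at h
            rw [hrow, ← ha, hm1] at h
            have : (x : ℤ) < (a : ℤ) := by linarith
            omega
        have hag0 := hag (n * (m - 1) + x) (by omega)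
        obtain ⟨f1, f2⟩ := hmodgen (m - 1) x (by omega)
        have hBA0 : lamBA C n (n * (m - 1) + x) = false := by
          simp only [lamBA, f1, f2, decide_eq_false_iff_not]
          intro hmem0
          have hpr0 : ((((n - 1 - x : ℕ) : ℤ), ((m - 1 : ℕ) : ℤ)) : ℤ × ℤ) ≠ r := by
            rw [hre]
            intro hcon
            have := congrArg Prod.fst hcon
            omega
          have h := htail _ hmem0 hpr0
          simp only at h
          rw [hrow, ← ha, hm1] at h
          have : ((n - 1 - x : ℕ) : ℤ) < (a : ℤ) := by linarith
          omega
        have hAB0 : lamAB C n (n * (m - 1) + x) = true := by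
          simp only [lamAB, f1, f2, decide_eq_true_eq]
          exact hb
        rw [hag0, hBA0] at hAB0
        simp at hAB0
      refine ⟨n * m + a, by omega, ?_, ?_, ?_⟩
      · intro k hk
        rcases lt_trichotomy k (n * (m - 1) + a) with hk1 | hk1 | hk1
        · exact hagree' k (by omega) (by omega) (by omega)
        · rw [hk1, L2, L3 _ (by omega) (by omega), ← hEq]
          exact hBAi.symm
        · by_cases hk2 : k < n * m
          · by_cases hk3 : k = n * (m - 1) + (n - 1 - a)
            · rw [hk3, P1 _ (by omega) (by omega), L4]
            · rw [P1 k hk1 hk2, P2 k hk1 hk2 hk3]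
          · have hge : n * m ≤ k := by omega
            have hlt2 : k < n * (m + 1) := by omega
            obtain ⟨-, hmk⟩ := hdivm k hge hlt2
            have hA : lamAB (insert (r.1, (m : ℤ)) (C.erase r)) n k = false := by
              rcases Bool.eq_false_or_eq_true
                (lamAB (insert (r.1, (m : ℤ)) (C.erase r)) n k) with hb | hb
              · have := (PmAB k hge hlt2).mp hb
                omega
              · exact hb
            have hB : lamBA (insert (r.1, (m : ℤ)) (C.erase r)) n k = false := by
              rcases Bool.eq_false_or_eq_true
                (lamBA (insert (r.1, (m : ℤ)) (C.erase r)) n k) with hb | hb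
              · have := (PmBA k hge hlt2).mp hb
                omega
              · exact hb
            rw [hA, hB]
      · obtain ⟨-, hmk⟩ := hdivm (n * m + a) (by omega) (by omega)
        rcases Bool.eq_false_or_eq_true
          (lamBA (insert (r.1, (m : ℤ)) (C.erase r)) n (n * m + a)) with hb | hb
        · have := (PmBA _ (by omega) (by omega)).mp hb
          omega
        · exact hb
      · obtain ⟨-, hmk⟩ := hdivm (n * m + a) (by omega) (by omega)
        exact (PmAB _ (by omega) (by omega)).mpr (by omega)
    · -- i < t : witness i
      refine ⟨i, by omega, ?_, ?_, ?_⟩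
      · intro k hk
        exact hagree' k hk (by omega) (by omega)
      · rw [L3 i (by omega) hiNe]
        exact hBAi
      · rw [L1 i (by omega) (by omega)]
        exact hABi

end RobotGrid
end

section
/- Let C be an asymmetric configuration with smallest enclosing rectangle ABCD of dimensions m × n, m > n, with λ_{AB} the lexicographically largest string, and suppose the side CD opposite to AB contains exactly one point r of C (the tail). Then after moving r one unit away from AB, the new configuration is still asymmetric and λ_{AB} computed in the new rectangle remains the unique largest corner string. -/
namespace RobotGrid

-- helpers to insert above the theorem (will be concatenated)
section Helpers

variable {C : Finset (ℤ × ℤ)} {n m : ℕ} {r : ℤ × ℤ}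

lemma mem_moved (hrow : r.2 = (m : ℤ) - 1)
    (huniq : ∀ p ∈ C, p.2 = (m : ℤ) - 1 → p = r) (x y : ℤ) :
    ((x, y) ∈ insert (r.1, (m : ℤ)) (C.erase r)) ↔
      ((x = r.1 ∧ y = (m : ℤ)) ∨ ((x, y) ∈ C ∧ y ≠ (m : ℤ) - 1)) := by
  simp only [Finset.mem_insert, Finset.mem_erase, Prod.mk.injEq, ne_eq]
  constructor
  · rintro (⟨h1, h2⟩ | ⟨hne, hmem⟩)
    · exact Or.inl ⟨h1, h2⟩
    · exact Or.inr ⟨hmem, fun hy => hne (huniq (x, y) hmem hy)⟩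
  · rintro (⟨h1, h2⟩ | ⟨hmem, hy⟩)
    · exact Or.inl ⟨h1, h2⟩
    · refine Or.inr ⟨fun he => hy ?_, hmem⟩
      have h2 := congrArg Prod.snd he
      simpa [hrow] using h2

lemma pt_low (hrow : r.2 = (m : ℤ) - 1)
    (huniq : ∀ p ∈ C, p.2 = (m : ℤ) - 1 → p = r) (x y : ℤ) (hy : y < (m : ℤ) - 1) :
    ((x, y) ∈ insert (r.1, (m : ℤ)) (C.erase r)) ↔ (x, y) ∈ C := by
  rw [mem_moved hrow huniq]
  constructor
  · rintro (⟨_, h2⟩ | ⟨h, _⟩)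
    · exfalso; omega
    · exact h
  · intro h; exact Or.inr ⟨h, by omega⟩

lemma pt_mid (hrow : r.2 = (m : ℤ) - 1)
    (huniq : ∀ p ∈ C, p.2 = (m : ℤ) - 1 → p = r) (x : ℤ) :
    ¬ ((x, (m : ℤ) - 1) ∈ insert (r.1, (m : ℤ)) (C.erase r)) := by
  rw [mem_moved hrow huniq]
  rintro (⟨_, h2⟩ | ⟨_, h2⟩)
  · omega
  · exact h2 rfl

lemma pt_top (hser : IsSER C n m) (hrow : r.2 = (m : ℤ) - 1)
    (huniq : ∀ p ∈ C, p.2 = (m : ℤ) - 1 → p = r) (x : ℤ) :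
    ((x, (m : ℤ)) ∈ insert (r.1, (m : ℤ)) (C.erase r)) ↔ x = r.1 := by
  rw [mem_moved hrow huniq]
  constructor
  · rintro (⟨h1, _⟩ | ⟨hmem, _⟩)
    · exact h1
    · exfalso; have := (hser.1 _ hmem).2.2.2; simp at this
  · intro h; exact Or.inl ⟨h, rfl⟩

lemma pt_oldtop (hr : r ∈ C) (hrow : r.2 = (m : ℤ) - 1)
    (huniq : ∀ p ∈ C, p.2 = (m : ℤ) - 1 → p = r) (x : ℤ) :
    ((x, (m : ℤ) - 1) ∈ C) ↔ x = r.1 := by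
  constructor
  · intro h
    exact congrArg Prod.fst (huniq _ h rfl)
  · rintro rfl
    have h : (r.1, (m : ℤ) - 1) = r := by rw [← hrow]
    rw [h]; exact hr

end Helpers

section ScanHelpers

variable {C : Finset (ℤ × ℤ)} {n m : ℕ} {r : ℤ × ℤ}

lemma sAB1 (hn0 : 0 < n) (hm : 1 ≤ m) (hrow : r.2 = (m : ℤ) - 1)
    (huniq : ∀ p ∈ C, p.2 = (m : ℤ) - 1 → p = r) (q : ℕ) (hq : q < (m-1)*n) :
    lamAB (insert (r.1, (m : ℤ)) (C.erase r)) n q = lamAB C n q := by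
  have hj : q / n < m - 1 := (Nat.div_lt_iff_lt_mul hn0).mpr hq
  simp only [lamAB]
  rw [decide_eq_decide]
  exact pt_low hrow huniq _ _ (by omega)

lemma sBA1 (hn0 : 0 < n) (hm : 1 ≤ m) (hrow : r.2 = (m : ℤ) - 1)
    (huniq : ∀ p ∈ C, p.2 = (m : ℤ) - 1 → p = r) (q : ℕ) (hq : q < (m-1)*n) :
    lamBA (insert (r.1, (m : ℤ)) (C.erase r)) n q = lamBA C n q := by
  have hj : q / n < m - 1 := (Nat.div_lt_iff_lt_mul hn0).mpr hq
  simp only [lamBA]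
  rw [decide_eq_decide]
  exact pt_low hrow huniq _ _ (by omega)

lemma sAB2 (hn0 : 0 < n) (hm : 1 ≤ m) (hrow : r.2 = (m : ℤ) - 1)
    (huniq : ∀ p ∈ C, p.2 = (m : ℤ) - 1 → p = r) (q : ℕ)
    (hq1 : (m-1)*n ≤ q) (hq2 : q < (m-1)*n + n) :
    lamAB (insert (r.1, (m : ℤ)) (C.erase r)) n q = false := by
  have ha := (Nat.le_div_iff_mul_le hn0).mpr hq1
  have hb : q < (m-1+1)*n := by
    have h : (m-1+1)*n = (m-1)*n + n := by ring
    omega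
  have hb' := (Nat.div_lt_iff_lt_mul hn0).mpr hb
  have hcast : ((q / n : ℕ) : ℤ) = (m : ℤ) - 1 := by omega
  simp only [lamAB, hcast]
  rw [decide_eq_false_iff_not]
  exact pt_mid hrow huniq _

lemma sBA2 (hn0 : 0 < n) (hm : 1 ≤ m) (hrow : r.2 = (m : ℤ) - 1)
    (huniq : ∀ p ∈ C, p.2 = (m : ℤ) - 1 → p = r) (q : ℕ)
    (hq1 : (m-1)*n ≤ q) (hq2 : q < (m-1)*n + n) :
    lamBA (insert (r.1, (m : ℤ)) (C.erase r)) n q = false := by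
  have ha := (Nat.le_div_iff_mul_le hn0).mpr hq1
  have hb : q < (m-1+1)*n := by
    have h : (m-1+1)*n = (m-1)*n + n := by ring
    omega
  have hb' := (Nat.div_lt_iff_lt_mul hn0).mpr hb
  have hcast : ((q / n : ℕ) : ℤ) = (m : ℤ) - 1 := by omega
  simp only [lamBA, hcast]
  rw [decide_eq_false_iff_not]
  exact pt_mid hrow huniq _

lemma sAB3 (hn0 : 0 < n) (hm : 1 ≤ m) (hser : IsSER C n m) (hr : r ∈ C)
    (hrow : r.2 = (m : ℤ) - 1)
    (huniq : ∀ p ∈ C, p.2 = (m : ℤ) - 1 → p = r) (q : ℕ)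
    (hq1 : (m-1)*n + n ≤ q) (hq2 : q < (m-1)*n + 2*n) :
    lamAB (insert (r.1, (m : ℤ)) (C.erase r)) n q = lamAB C n (q - n) := by
  have hnq : n ≤ q := le_trans (Nat.le_add_left n _) hq1
  obtain ⟨d, rfl⟩ : ∃ d, q = d + n := ⟨q - n, by omega⟩
  have ha : (m-1+1)*n ≤ d + n := by
    have h : (m-1+1)*n = (m-1)*n + n := by ring
    omega
  have hb : d + n < (m-1+2)*n := by
    have h : (m-1+2)*n = (m-1)*n + 2*n := by ring
    omega
  have ha' := (Nat.le_div_iff_mul_le hn0).mpr ha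
  have hb' := (Nat.div_lt_iff_lt_mul hn0).mpr hb
  rw [Nat.add_div_right _ hn0] at ha' hb'
  have hj : d / n = m - 1 := by omega
  simp only [lamAB, Nat.add_sub_cancel, Nat.add_mod_right, Nat.add_div_right _ hn0, hj]
  have h1 : ((m - 1 + 1 : ℕ) : ℤ) = (m : ℤ) := by omega
  have h2 : ((m - 1 : ℕ) : ℤ) = (m : ℤ) - 1 := by omega
  rw [h1, h2, decide_eq_decide, pt_top hser hrow huniq, pt_oldtop hr hrow huniq]

lemma sBA3 (hn0 : 0 < n) (hm : 1 ≤ m) (hser : IsSER C n m) (hr : r ∈ C)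
    (hrow : r.2 = (m : ℤ) - 1)
    (huniq : ∀ p ∈ C, p.2 = (m : ℤ) - 1 → p = r) (q : ℕ)
    (hq1 : (m-1)*n + n ≤ q) (hq2 : q < (m-1)*n + 2*n) :
    lamBA (insert (r.1, (m : ℤ)) (C.erase r)) n q = lamBA C n (q - n) := by
  have hnq : n ≤ q := le_trans (Nat.le_add_left n _) hq1
  obtain ⟨d, rfl⟩ : ∃ d, q = d + n := ⟨q - n, by omega⟩
  have ha : (m-1+1)*n ≤ d + n := by
    have h : (m-1+1)*n = (m-1)*n + n := by ring
    omega
  have hb : d + n < (m-1+2)*n := by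
    have h : (m-1+2)*n = (m-1)*n + 2*n := by ring
    omega
  have ha' := (Nat.le_div_iff_mul_le hn0).mpr ha
  have hb' := (Nat.div_lt_iff_lt_mul hn0).mpr hb
  rw [Nat.add_div_right _ hn0] at ha' hb'
  have hj : d / n = m - 1 := by omega
  simp only [lamBA, Nat.add_sub_cancel, Nat.add_mod_right, Nat.add_div_right _ hn0, hj]
  have h1 : ((m - 1 + 1 : ℕ) : ℤ) = (m : ℤ) := by omega
  have h2 : ((m - 1 : ℕ) : ℤ) = (m : ℤ) - 1 := by omega
  rw [h1, h2, decide_eq_decide, pt_top hser hrow huniq, pt_oldtop hr hrow huniq]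

lemma sDC1 (hn0 : 0 < n) (hm : 1 ≤ m) (hser : IsSER C n m) (hr : r ∈ C)
    (hrow : r.2 = (m : ℤ) - 1)
    (huniq : ∀ p ∈ C, p.2 = (m : ℤ) - 1 → p = r) (q : ℕ) (hq : q < n) :
    lamDC (insert (r.1, (m : ℤ)) (C.erase r)) n (m+1) q = lamDC C n m q := by
  have hj : q / n = 0 := Nat.div_eq_of_lt hq
  simp only [lamDC, hj, Nat.sub_zero, Nat.add_sub_cancel]
  have h2 : ((m - 1 : ℕ) : ℤ) = (m : ℤ) - 1 := by omega
  rw [h2, decide_eq_decide, pt_top hser hrow huniq, pt_oldtop hr hrow huniq]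

lemma sCD1 (hn0 : 0 < n) (hm : 1 ≤ m) (hser : IsSER C n m) (hr : r ∈ C)
    (hrow : r.2 = (m : ℤ) - 1)
    (huniq : ∀ p ∈ C, p.2 = (m : ℤ) - 1 → p = r) (q : ℕ) (hq : q < n) :
    lamCD (insert (r.1, (m : ℤ)) (C.erase r)) n (m+1) q = lamCD C n m q := by
  have hj : q / n = 0 := Nat.div_eq_of_lt hq
  simp only [lamCD, hj, Nat.sub_zero, Nat.add_sub_cancel]
  have h2 : ((m - 1 : ℕ) : ℤ) = (m : ℤ) - 1 := by omega
  rw [h2, decide_eq_decide, pt_top hser hrow huniq, pt_oldtop hr hrow huniq]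

lemma sDC2 (hn0 : 0 < n) (hm : 1 ≤ m) (hrow : r.2 = (m : ℤ) - 1)
    (huniq : ∀ p ∈ C, p.2 = (m : ℤ) - 1 → p = r) (q : ℕ)
    (hq1 : n ≤ q) (hq2 : q < 2*n) :
    lamDC (insert (r.1, (m : ℤ)) (C.erase r)) n (m+1) q = false := by
  have ha := (Nat.le_div_iff_mul_le hn0).mpr (show 1*n ≤ q by omega)
  have hb := (Nat.div_lt_iff_lt_mul hn0).mpr (show q < 2*n by omega)
  have hj : q / n = 1 := by omega
  simp only [lamDC, hj]
  have h2 : ((m + 1 - 1 - 1 : ℕ) : ℤ) = (m : ℤ) - 1 := by omega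
  rw [h2, decide_eq_false_iff_not]
  exact pt_mid hrow huniq _

lemma sCD2 (hn0 : 0 < n) (hm : 1 ≤ m) (hrow : r.2 = (m : ℤ) - 1)
    (huniq : ∀ p ∈ C, p.2 = (m : ℤ) - 1 → p = r) (q : ℕ)
    (hq1 : n ≤ q) (hq2 : q < 2*n) :
    lamCD (insert (r.1, (m : ℤ)) (C.erase r)) n (m+1) q = false := by
  have ha := (Nat.le_div_iff_mul_le hn0).mpr (show 1*n ≤ q by omega)
  have hb := (Nat.div_lt_iff_lt_mul hn0).mpr (show q < 2*n by omega)
  have hj : q / n = 1 := by omega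
  simp only [lamCD, hj]
  have h2 : ((m + 1 - 1 - 1 : ℕ) : ℤ) = (m : ℤ) - 1 := by omega
  rw [h2, decide_eq_false_iff_not]
  exact pt_mid hrow huniq _

lemma sDC3 (hn0 : 0 < n) (hm : 2 ≤ m) (hrow : r.2 = (m : ℤ) - 1)
    (huniq : ∀ p ∈ C, p.2 = (m : ℤ) - 1 → p = r) (q : ℕ)
    (hq1 : 2*n ≤ q) (hq2 : q < (m-1)*n + 2*n) :
    lamDC (insert (r.1, (m : ℤ)) (C.erase r)) n (m+1) q = lamDC C n m (q - n) := by
  obtain ⟨d, rfl⟩ : ∃ d, q = d + n := ⟨q - n, by omega⟩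
  have ha' := (Nat.le_div_iff_mul_le hn0).mpr (show 1*n ≤ d by omega)
  have hb : d + n < (m-1+2)*n := by
    have h : (m-1+2)*n = (m-1)*n + 2*n := by ring
    omega
  have hb' := (Nat.div_lt_iff_lt_mul hn0).mpr hb
  rw [Nat.add_div_right _ hn0] at hb'
  simp only [lamDC, Nat.add_sub_cancel, Nat.add_mod_right, Nat.add_div_right _ hn0]
  have h1 : ((m - (d/n + 1) : ℕ) : ℤ) = ((m - 1 - d/n : ℕ) : ℤ) := by omega
  have h2 : ((m - 1 - d/n : ℕ) : ℤ) < (m : ℤ) - 1 := by omega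
  rw [h1, decide_eq_decide]
  exact pt_low hrow huniq _ _ h2

lemma sCD3 (hn0 : 0 < n) (hm : 2 ≤ m) (hrow : r.2 = (m : ℤ) - 1)
    (huniq : ∀ p ∈ C, p.2 = (m : ℤ) - 1 → p = r) (q : ℕ)
    (hq1 : 2*n ≤ q) (hq2 : q < (m-1)*n + 2*n) :
    lamCD (insert (r.1, (m : ℤ)) (C.erase r)) n (m+1) q = lamCD C n m (q - n) := by
  obtain ⟨d, rfl⟩ : ∃ d, q = d + n := ⟨q - n, by omega⟩
  have ha' := (Nat.le_div_iff_mul_le hn0).mpr (show 1*n ≤ d by omega)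
  have hb : d + n < (m-1+2)*n := by
    have h : (m-1+2)*n = (m-1)*n + 2*n := by ring
    omega
  have hb' := (Nat.div_lt_iff_lt_mul hn0).mpr hb
  rw [Nat.add_div_right _ hn0] at hb'
  simp only [lamCD, Nat.add_sub_cancel, Nat.add_mod_right, Nat.add_div_right _ hn0]
  have h1 : ((m - (d/n + 1) : ℕ) : ℤ) = ((m - 1 - d/n : ℕ) : ℤ) := by omega
  have h2 : ((m - 1 - d/n : ℕ) : ℤ) < (m : ℤ) - 1 := by omega
  rw [h1, decide_eq_decide]
  exact pt_low hrow huniq _ _ h2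

lemma sABtop (hn0 : 0 < n) (hm : 1 ≤ m) (hr : r ∈ C) (hrow : r.2 = (m : ℤ) - 1)
    (huniq : ∀ p ∈ C, p.2 = (m : ℤ) - 1 → p = r) (q : ℕ)
    (hq1 : (m-1)*n ≤ q) (hq2 : q < (m-1)*n + n) :
    (lamAB C n q = true ↔ ((q % n : ℕ) : ℤ) = r.1) := by
  have ha := (Nat.le_div_iff_mul_le hn0).mpr hq1
  have hb : q < (m-1+1)*n := by
    have h : (m-1+1)*n = (m-1)*n + n := by ring
    omega
  have hb' := (Nat.div_lt_iff_lt_mul hn0).mpr hb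
  have hcast : ((q / n : ℕ) : ℤ) = (m : ℤ) - 1 := by omega
  simp only [lamAB, hcast]
  rw [decide_eq_true_eq]
  exact pt_oldtop hr hrow huniq _

end ScanHelpers

section GeoHelpers

lemma eqmax {n M : ℕ} {p q : ℤ × ℤ}
    (hp : inRect n M p) (hq : inRect n M q)
    (h : sqdist p q = ((n:ℤ)-1)^2 + ((M:ℤ)-1)^2) :
    ((p.1 = 0 ∧ q.1 = (n:ℤ)-1) ∨ (p.1 = (n:ℤ)-1 ∧ q.1 = 0)) ∧
    ((p.2 = 0 ∧ q.2 = (M:ℤ)-1) ∨ (p.2 = (M:ℤ)-1 ∧ q.2 = 0)) := by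
  obtain ⟨a1, a2, a3, a4⟩ := hp
  obtain ⟨b1, b2, b3, b4⟩ := hq
  have hx : (p.1 - q.1)^2 ≤ ((n:ℤ)-1)^2 := sq_le_sq' (by omega) (by omega)
  have hy : (p.2 - q.2)^2 ≤ ((M:ℤ)-1)^2 := sq_le_sq' (by omega) (by omega)
  unfold sqdist at h
  have hx2 : (p.1 - q.1)^2 = ((n:ℤ)-1)^2 := by linarith
  have hy2 : (p.2 - q.2)^2 = ((M:ℤ)-1)^2 := by linarith
  constructor
  · have h0 : (p.1 - q.1 - ((n:ℤ)-1)) * (p.1 - q.1 + ((n:ℤ)-1)) = 0 := by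
      linear_combination hx2
    rcases mul_eq_zero.mp h0 with h0 | h0
    · exact Or.inr ⟨by omega, by omega⟩
    · exact Or.inl ⟨by omega, by omega⟩
  · have h0 : (p.2 - q.2 - ((M:ℤ)-1)) * (p.2 - q.2 + ((M:ℤ)-1)) = 0 := by
      linear_combination hy2
    rcases mul_eq_zero.mp h0 with h0 | h0
    · exact Or.inr ⟨by omega, by omega⟩
    · exact Or.inl ⟨by omega, by omega⟩

lemma fixB {n M : ℕ} (hn : 1 < n) (hM : n < M)
    {u v b1 b2 d1 d2 : ℤ}
    (hbx : (b1 = 0 ∧ d1 = (n:ℤ)-1) ∨ (b1 = (n:ℤ)-1 ∧ d1 = 0))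
    (hby : (b2 = 0 ∧ d2 = (M:ℤ)-1) ∨ (b2 = (M:ℤ)-1 ∧ d2 = 0))
    (hu : u = 0 ∨ u = (n:ℤ)-1) (hv : v = 0 ∨ v = (M:ℤ)-1)
    (hd : (u - b1)^2 + (v - b2)^2 = ((n:ℤ)-1)^2) :
    b1 = (n:ℤ)-1-u ∧ b2 = v ∧ d1 = u ∧ d2 = (M:ℤ)-1-v := by
  have hn' : (0:ℤ) ≤ (n:ℤ)-1 := by omega
  have hM' : ((n:ℤ)-1) < ((M:ℤ)-1) := by omega
  have hsq : ((n:ℤ)-1)^2 < ((M:ℤ)-1)^2 := by nlinarith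
  have h1 : b2 = v := by
    rcases hv with h | h <;> rcases hby with ⟨h', _⟩ | ⟨h', _⟩ <;> rw [h, h'] <;>
      first
        | rfl
        | (exfalso; rw [h, h'] at hd; nlinarith [sq_nonneg (u - b1)])
  rw [h1] at hd
  have hd' : (u - b1)^2 = ((n:ℤ)-1)^2 := by nlinarith [sq_nonneg (v - v)]
  have hn2 : (1:ℤ) ≤ (n:ℤ)-1 := by omega
  have hb1 : b1 = (n:ℤ)-1-u := by
    rcases hu with h | h <;> rcases hbx with ⟨h', _⟩ | ⟨h', _⟩ <;>
        rw [h, h'] <;> rw [h, h'] at hd'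
    · exfalso; nlinarith
    · ring
    · ring
    · exfalso; nlinarith
  refine ⟨hb1, h1, ?_, ?_⟩
  · rcases hbx with ⟨h', h''⟩ | ⟨h', h''⟩ <;> rcases hu with h | h <;> omega
  · rcases hby with ⟨h', h''⟩ | ⟨h', h''⟩ <;> rcases hv with h | h <;> omega

lemma trilat {n M : ℕ} (hn : 1 < n) (hM : 1 < M) {f : ℤ × ℤ → ℤ × ℤ}
    (hiso : ∀ p q : ℤ × ℤ, sqdist (f p) (f q) = sqdist p q)
    {u v : ℤ}
    (hA : f ((0:ℤ), (0:ℤ)) = (u, v))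
    (hB : f (((n:ℤ)-1), (0:ℤ)) = ((n:ℤ)-1-u, v))
    (hD : f ((0:ℤ), ((M:ℤ)-1)) = (u, (M:ℤ)-1-v))
    (hu : u = 0 ∨ u = (n:ℤ)-1) (hv : v = 0 ∨ v = (M:ℤ)-1)
    (w : ℤ × ℤ) :
    f w = ((if u = 0 then w.1 else (n:ℤ)-1-w.1),
           (if v = 0 then w.2 else (M:ℤ)-1-w.2)) := by
  have E1 := hiso w ((0:ℤ), (0:ℤ))
  have E2 := hiso w (((n:ℤ)-1), (0:ℤ))
  have E3 := hiso w ((0:ℤ), ((M:ℤ)-1))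
  rw [hA] at E1; rw [hB] at E2; rw [hD] at E3
  simp only [sqdist] at E1 E2 E3
  have hx : (f w).1 = if u = 0 then w.1 else (n:ℤ)-1-w.1 := by
    rcases hu with h | h
    · rw [if_pos h]
      subst h
      have key : (2*((n:ℤ)-1)) * ((f w).1 - w.1) = 0 := by linear_combination E1 - E2
      rcases mul_eq_zero.mp key with h' | h'
      · exfalso; omega
      · omega
    · rw [if_neg (by omega)]
      subst h
      have key : (2*((n:ℤ)-1)) * ((f w).1 - (((n:ℤ)-1) - w.1)) = 0 := by
        linear_combination E2 - E1
      rcases mul_eq_zero.mp key with h' | h'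
      · exfalso; omega
      · omega
  have hy : (f w).2 = if v = 0 then w.2 else (M:ℤ)-1-w.2 := by
    rcases hv with h | h
    · rw [if_pos h]
      subst h
      have key : (2*((M:ℤ)-1)) * ((f w).2 - w.2) = 0 := by linear_combination E1 - E3
      rcases mul_eq_zero.mp key with h' | h'
      · exfalso; omega
      · omega
    · rw [if_neg (by omega)]
      subst h
      have key : (2*((M:ℤ)-1)) * ((f w).2 - (((M:ℤ)-1) - w.2)) = 0 := by
        linear_combination E3 - E1
      rcases mul_eq_zero.mp key with h' | h'
      · exfalso; omega
      · omega
  exact Prod.ext hx hy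

end GeoHelpers


lemma lexGT_insertA (n N : ℕ) (hnN : n ≤ N) (s t s' t' : ℕ → Bool)
    (hs1 : ∀ k, k < N → s' k = s k) (ht1 : ∀ k, k < N → t' k = t k)
    (hs2 : ∀ k, N ≤ k → k < N + n → s' k = false)
    (ht2 : ∀ k, N ≤ k → k < N + n → t' k = false)
    (hs3 : ∀ k, N + n ≤ k → k < N + 2*n → s' k = s (k - n))
    (ht3 : ∀ k, N + n ≤ k → k < N + 2*n → t' k = t (k - n))
    (h : LexGT (N + n) s t) : LexGT (N + 2*n) s' t' := by
  obtain ⟨i, hiL, hag, hti, hsi⟩ := h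
  by_cases hc : i < N
  · refine ⟨i, by omega, ?_, ?_, ?_⟩
    · intro k hk
      rw [hs1 k (by omega), ht1 k (by omega)]; exact hag k hk
    · rw [ht1 i hc]; exact hti
    · rw [hs1 i hc]; exact hsi
  · push_neg at hc
    refine ⟨i + n, by omega, ?_, ?_, ?_⟩
    · intro k hk
      rcases lt_or_ge k N with h1 | h1
      · rw [hs1 k h1, ht1 k h1]; exact hag k (by omega)
      · rcases lt_or_ge k (N + n) with h2 | h2
        · rw [hs2 k h1 h2, ht2 k h1 h2]
        · rw [hs3 k h2 (by omega), ht3 k h2 (by omega)]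
          exact hag (k - n) (by omega)
    · rw [ht3 (i+n) (by omega) (by omega)]; simpa using hti
    · rw [hs3 (i+n) (by omega) (by omega)]; simpa using hsi

lemma lexGT_insertB (n N : ℕ) (hn : 0 < n) (hnN : n ≤ N) (s t s' t' : ℕ → Bool)
    (hs1 : ∀ k, k < N → s' k = s k)
    (ht1 : ∀ k, k < n → t' k = t k)
    (ht2 : ∀ k, n ≤ k → k < 2*n → t' k = false)
    (ht3 : ∀ k, 2*n ≤ k → k < N + 2*n → t' k = t (k - n))
    (h : LexGT (N + n) s t)
    (hex : ∃ k, n ≤ k ∧ k < N + n ∧ s k = true)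
    (huT : ∀ j k, N ≤ j → j < N + n → N ≤ k → k < N + n → s j = true → s k = true → j = k)
    (hsem : ∀ j, N ≤ j → j < N + n → s j = true → (∀ k, k < n → s k = t k) → t j = true) :
    LexGT (N + 2*n) s' t' := by
  obtain ⟨i, hiL, hag, hti, hsi⟩ := h
  by_cases hc : i < n
  · refine ⟨i, by omega, ?_, ?_, ?_⟩
    · intro k hk; rw [hs1 k (by omega), ht1 k (by omega)]; exact hag k hk
    · rw [ht1 i hc]; exact hti
    · rw [hs1 i (by omega)]; exact hsi
  · push_neg at hc
    obtain ⟨k₀, hk1, hk2, hk3⟩ := hex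
    have hP : ∃ k, n ≤ k ∧ s k = true := ⟨k₀, hk1, hk3⟩
    have hspec := Nat.find_spec hP
    set i0 := Nat.find hP with hi0
    have hmin : ∀ k, k < i0 → ¬(n ≤ k ∧ s k = true) := fun k hk => Nat.find_min hP hk
    have hi0le : i0 ≤ i := Nat.find_min' hP ⟨hc, hsi⟩
    have hmf : ∀ k, n ≤ k → k < i0 → s k = false := by
      intro k h1 h2
      cases hb : s k with
      | false => rfl
      | true => exact absurd ⟨h1, hb⟩ (hmin k h2)
    by_cases hcase : i0 < N
    · refine ⟨i0, by omega, ?_, ?_, ?_⟩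
      · intro k hk
        rcases lt_or_ge k n with h1 | h1
        · rw [hs1 k (by omega), ht1 k h1]; exact hag k (by omega)
        · rw [hs1 k (by omega), hmf k h1 hk]
          rcases lt_or_ge k (2*n) with h2 | h2
          · rw [ht2 k h1 h2]
          · rw [ht3 k h2 (by omega), ← hag (k-n) (by omega), hmf (k-n) (by omega) (by omega)]
      · rcases lt_or_ge i0 (2*n) with h2 | h2
        · exact ht2 i0 hspec.1 h2
        · rw [ht3 i0 h2 (by omega), ← hag (i0 - n) (by omega)]
          exact hmf (i0-n) (by omega) (by omega)
      · rw [hs1 i0 hcase]; exact hspec.2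
    · exfalso
      have h1 : i = i0 := huT i i0 (by omega) hiL (by omega) (by omega) hsi hspec.2
      have h2 : t i0 = true := hsem i0 (by omega) (by omega) hspec.2
        (fun k hk => hag k (by omega))
      rw [← h1, hti] at h2; exact Bool.false_ne_true h2


/-- if the side `CD` opposite to `AB` (the top row `y = m-1`)
contains exactly one point `r` of the asymmetric configuration `C` with
`λ_{AB}` the largest corner string, then after moving `r` one unit away from
`AB`, the new configuration is still asymmetric and `λ_{AB}` computed in the
new rectangle remains the unique largest corner string. -/
theorem tail_up_move_preserves_asymmetry
    (C : Finset (ℤ × ℤ)) (n m : ℕ) (hn : 1 < n) (hnm : n < m)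
    (hser : IsSER C n m) (hasym : Asymmetric n m C)
    (hBA : LexGT (n * m) (lamAB C n) (lamBA C n))
    (hDC : LexGT (n * m) (lamAB C n) (lamDC C n m))
    (hCD : LexGT (n * m) (lamAB C n) (lamCD C n m))
    (r : ℤ × ℤ) (hr : r ∈ C) (hrow : r.2 = (m : ℤ) - 1)
    (huniq : ∀ p ∈ C, p.2 = (m : ℤ) - 1 → p = r) :
    Asymmetric n (m + 1) (insert (r.1, (m : ℤ)) (C.erase r)) ∧
    LexGT (n * (m + 1)) (lamAB (insert (r.1, (m : ℤ)) (C.erase r)) n)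
      (lamBA (insert (r.1, (m : ℤ)) (C.erase r)) n) ∧
    LexGT (n * (m + 1)) (lamAB (insert (r.1, (m : ℤ)) (C.erase r)) n)
      (lamDC (insert (r.1, (m : ℤ)) (C.erase r)) n (m + 1)) ∧
    LexGT (n * (m + 1)) (lamAB (insert (r.1, (m : ℤ)) (C.erase r)) n)
      (lamCD (insert (r.1, (m : ℤ)) (C.erase r)) n (m + 1)) := by
  have hn0 : 0 < n := by omega
  have hm1 : 1 ≤ m := by omega
  have hm2 : 2 ≤ m := by omega
  have e1 : (m-1)*n + n = n*m := by
    have h : m - 1 + 1 = m := by omega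
    calc (m-1)*n + n = (m-1+1)*n := by ring
      _ = m*n := by rw [h]
      _ = n*m := Nat.mul_comm m n
  have e2 : (m-1)*n + 2*n = n*(m+1) := by
    have h : m - 1 + 2 = m + 1 := by omega
    calc (m-1)*n + 2*n = (m-1+2)*n := by ring
      _ = (m+1)*n := by rw [h]
      _ = n*(m+1) := Nat.mul_comm _ _
  have hnN : n ≤ (m-1)*n := Nat.le_mul_of_pos_left n (by omega)
  obtain ⟨hr1, hr2, hr3, hr4⟩ := hser.1 r hr
  set a := r.1.toNat with hadef
  have ha0 : (a : ℤ) = r.1 := Int.toNat_of_nonneg hr1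
  have han : a < n := by omega
  have hBA' : LexGT (n*(m+1)) (lamAB (insert (r.1, (m:ℤ)) (C.erase r)) n)
      (lamBA (insert (r.1, (m:ℤ)) (C.erase r)) n) := by
    rw [← e2]
    exact lexGT_insertA n ((m-1)*n) hnN _ _ _ _
      (fun k hk => sAB1 hn0 hm1 hrow huniq k hk)
      (fun k hk => sBA1 hn0 hm1 hrow huniq k hk)
      (fun k h1 h2 => sAB2 hn0 hm1 hrow huniq k h1 h2)
      (fun k h1 h2 => sBA2 hn0 hm1 hrow huniq k h1 h2)
      (fun k h1 h2 => sAB3 hn0 hm1 hser hr hrow huniq k h1 h2)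
      (fun k h1 h2 => sBA3 hn0 hm1 hser hr hrow huniq k h1 h2)
      (by rw [e1]; exact hBA)
  have hexk : ∃ k, n ≤ k ∧ k < (m-1)*n + n ∧ lamAB C n k = true := by
    refine ⟨a + (m-1)*n, by omega, by omega, ?_⟩
    rw [sABtop hn0 hm1 hr hrow huniq _ (by omega) (by omega)]
    rw [Nat.add_mul_mod_self_right, Nat.mod_eq_of_lt han]
    exact ha0
  have hdivtop : ∀ j, (m-1)*n ≤ j → j < (m-1)*n + n → j / n = m - 1 := by
    intro j h1 h2
    have hga := (Nat.le_div_iff_mul_le hn0).mpr h1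
    have hgb : j < (m-1+1)*n := by
      have h : (m-1+1)*n = (m-1)*n + n := by ring
      omega
    have hgb' := (Nat.div_lt_iff_lt_mul hn0).mpr hgb
    omega
  have huT : ∀ j k, (m-1)*n ≤ j → j < (m-1)*n + n → (m-1)*n ≤ k → k < (m-1)*n + n →
      lamAB C n j = true → lamAB C n k = true → j = k := by
    intro j k h1 h2 h3 h4 hj hk
    have hj' := (sABtop hn0 hm1 hr hrow huniq j h1 h2).mp hj
    have hk' := (sABtop hn0 hm1 hr hrow huniq k h3 h4).mp hk
    have hdj := hdivtop j h1 h2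
    have hdk := hdivtop k h3 h4
    have e3 := Nat.div_add_mod j n
    have e4 := Nat.div_add_mod k n
    rw [hdj] at e3
    rw [hdk] at e4
    omega
  have hsemDC : ∀ j, (m-1)*n ≤ j → j < (m-1)*n + n → lamAB C n j = true →
      (∀ k, k < n → lamAB C n k = lamDC C n m k) → lamDC C n m j = true := by
    intro j h1 h2 hj hagr
    have hj' := (sABtop hn0 hm1 hr hrow huniq j h1 h2).mp hj
    have hdj := hdivtop j h1 h2
    have h5 : lamDC C n m a = true := by
      simp only [lamDC, Nat.mod_eq_of_lt han, Nat.div_eq_of_lt han, Nat.sub_zero]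
      rw [show ((m-1:ℕ):ℤ) = (m:ℤ)-1 from by omega, decide_eq_true_eq,
        pt_oldtop hr hrow huniq]
      exact ha0
    have h6 : lamAB C n a = true := by rw [hagr a han]; exact h5
    have h7 : ((a:ℤ), (0:ℤ)) ∈ C := by
      simp only [lamAB, Nat.mod_eq_of_lt han, Nat.div_eq_of_lt han, Nat.cast_zero,
        decide_eq_true_eq] at h6
      exact h6
    simp only [lamDC, hdj]
    rw [show (m-1-(m-1):ℕ) = 0 from by omega, show j % n = a from by omega]
    simp only [Nat.cast_zero, decide_eq_true_eq]
    exact h7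
  have hsemCD : ∀ j, (m-1)*n ≤ j → j < (m-1)*n + n → lamAB C n j = true →
      (∀ k, k < n → lamAB C n k = lamCD C n m k) → lamCD C n m j = true := by
    intro j h1 h2 hj hagr
    have hj' := (sABtop hn0 hm1 hr hrow huniq j h1 h2).mp hj
    have hdj := hdivtop j h1 h2
    have hbn : n - 1 - a < n := by omega
    have h5 : lamCD C n m (n-1-a) = true := by
      simp only [lamCD, Nat.mod_eq_of_lt hbn, Nat.div_eq_of_lt hbn, Nat.sub_zero]
      rw [show (n-1-(n-1-a) : ℕ) = a from by omega,
        show ((m-1:ℕ):ℤ) = (m:ℤ)-1 from by omega, decide_eq_true_eq,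
        pt_oldtop hr hrow huniq]
      exact ha0
    have h6 : lamAB C n (n-1-a) = true := by rw [hagr _ hbn]; exact h5
    have h7 : (((n-1-a : ℕ):ℤ), (0:ℤ)) ∈ C := by
      simp only [lamAB, Nat.mod_eq_of_lt hbn, Nat.div_eq_of_lt hbn, Nat.cast_zero,
        decide_eq_true_eq] at h6
      exact h6
    simp only [lamCD, hdj]
    rw [show (m-1-(m-1):ℕ) = 0 from by omega, show j % n = a from by omega]
    simp only [Nat.cast_zero, decide_eq_true_eq]
    exact h7
  have hDC' : LexGT (n*(m+1)) (lamAB (insert (r.1, (m:ℤ)) (C.erase r)) n)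
      (lamDC (insert (r.1, (m:ℤ)) (C.erase r)) n (m+1)) := by
    rw [← e2]
    exact lexGT_insertB n ((m-1)*n) hn0 hnN _ _ _ _
      (fun k hk => sAB1 hn0 hm1 hrow huniq k hk)
      (fun k hk => sDC1 hn0 hm1 hser hr hrow huniq k hk)
      (fun k h1 h2 => sDC2 hn0 hm1 hrow huniq k h1 h2)
      (fun k h1 h2 => sDC3 hn0 hm2 hrow huniq k h1 h2)
      (by rw [e1]; exact hDC) hexk huT hsemDC
  have hCD' : LexGT (n*(m+1)) (lamAB (insert (r.1, (m:ℤ)) (C.erase r)) n)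
      (lamCD (insert (r.1, (m:ℤ)) (C.erase r)) n (m+1)) := by
    rw [← e2]
    exact lexGT_insertB n ((m-1)*n) hn0 hnN _ _ _ _
      (fun k hk => sAB1 hn0 hm1 hrow huniq k hk)
      (fun k hk => sCD1 hn0 hm1 hser hr hrow huniq k hk)
      (fun k h1 h2 => sCD2 hn0 hm1 hrow huniq k h1 h2)
      (fun k h1 h2 => sCD3 hn0 hm2 hrow huniq k h1 h2)
      (by rw [e1]; exact hCD) hexk huT hsemCD
  have hasy : Asymmetric n (m+1) (insert (r.1, (m:ℤ)) (C.erase r)) := by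
    intro f hf p hp
    obtain ⟨hbij, hiso, hrectf, hmemf⟩ := hf
    have mkRect : ∀ x y : ℤ, 0 ≤ x → x < n → 0 ≤ y → y < ((m+1:ℕ):ℤ) →
        inRect n (m+1) (x, y) := fun x y h1 h2 h3 h4 => ⟨h1, h2, h3, h4⟩
    have hArect := mkRect 0 0 (le_refl _) (by exact_mod_cast hn0) (le_refl _)
      (by exact_mod_cast Nat.succ_pos m)
    have hBrect := mkRect ((n:ℤ)-1) 0 (by omega) (by omega) (le_refl _)
      (by exact_mod_cast Nat.succ_pos m)
    have hDrect := mkRect 0 (((m+1:ℕ):ℤ)-1) (le_refl _) (by exact_mod_cast hn0)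
      (by omega) (by omega)
    have hCrect := mkRect ((n:ℤ)-1) (((m+1:ℕ):ℤ)-1) (by omega) (by omega)
      (by omega) (by omega)
    have dAC : sqdist ((0:ℤ),(0:ℤ)) (((n:ℤ)-1), (((m+1:ℕ):ℤ)-1)) =
        ((n:ℤ)-1)^2 + (((m+1:ℕ):ℤ)-1)^2 := by
      show ((0:ℤ) - ((n:ℤ)-1))^2 + ((0:ℤ) - (((m+1:ℕ):ℤ)-1))^2 = _
      ring
    have dBD : sqdist (((n:ℤ)-1),(0:ℤ)) ((0:ℤ), (((m+1:ℕ):ℤ)-1)) =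
        ((n:ℤ)-1)^2 + (((m+1:ℕ):ℤ)-1)^2 := by
      show (((n:ℤ)-1) - (0:ℤ))^2 + ((0:ℤ) - (((m+1:ℕ):ℤ)-1))^2 = _
      ring
    have eAC := eqmax ((hrectf _).mp hArect) ((hrectf _).mp hCrect)
      (by rw [hiso]; exact dAC)
    have eBD := eqmax ((hrectf _).mp hBrect) ((hrectf _).mp hDrect)
      (by rw [hiso]; exact dBD)
    have hu : (f ((0:ℤ),(0:ℤ))).1 = 0 ∨ (f ((0:ℤ),(0:ℤ))).1 = (n:ℤ)-1 := by
      rcases eAC.1 with ⟨h, _⟩ | ⟨h, _⟩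
      exacts [Or.inl h, Or.inr h]
    have hv : (f ((0:ℤ),(0:ℤ))).2 = 0 ∨ (f ((0:ℤ),(0:ℤ))).2 = ((m+1:ℕ):ℤ)-1 := by
      rcases eAC.2 with ⟨h, _⟩ | ⟨h, _⟩
      exacts [Or.inl h, Or.inr h]
    have dfAB : ((f ((0:ℤ),(0:ℤ))).1 - (f (((n:ℤ)-1),(0:ℤ))).1)^2 +
        ((f ((0:ℤ),(0:ℤ))).2 - (f (((n:ℤ)-1),(0:ℤ))).2)^2 = ((n:ℤ)-1)^2 := by
      have h := hiso ((0:ℤ),(0:ℤ)) (((n:ℤ)-1),(0:ℤ))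
      simp only [sqdist] at h
      rw [h]
      show ((0:ℤ) - ((n:ℤ)-1))^2 + ((0:ℤ)-(0:ℤ))^2 = ((n:ℤ)-1)^2
      ring
    obtain ⟨hB1, hB2, hD1, hD2⟩ := fixB hn (show n < m + 1 by omega) eBD.1 eBD.2 hu hv dfAB
    have hfA : f ((0:ℤ),(0:ℤ)) = ((f ((0:ℤ),(0:ℤ))).1, (f ((0:ℤ),(0:ℤ))).2) :=
      Prod.mk.eta.symm
    have hfB : f (((n:ℤ)-1),(0:ℤ)) =
        ((n:ℤ)-1-(f ((0:ℤ),(0:ℤ))).1, (f ((0:ℤ),(0:ℤ))).2) := Prod.ext hB1 hB2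
    have hfD : f ((0:ℤ),(((m+1:ℕ):ℤ)-1)) =
        ((f ((0:ℤ),(0:ℤ))).1, ((m+1:ℕ):ℤ)-1-(f ((0:ℤ),(0:ℤ))).2) := Prod.ext hD1 hD2
    have htr := trilat hn (show 1 < m + 1 by omega) hiso hfA hfB hfD hu hv
    rcases hu with hu0 | hu1 <;> rcases hv with hv0 | hv1
    · have h := htr p
      rw [if_pos hu0, if_pos hv0] at h
      rw [h]
    · exfalso
      obtain ⟨i, hiL, _, hti, hsi⟩ := hDC'
      have hxlt : i % n < n := Nat.mod_lt _ hn0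
      have hjlt : i / n < m + 1 := by
        have hcomm : (m+1)*n = n*(m+1) := Nat.mul_comm _ _
        exact (Nat.div_lt_iff_lt_mul hn0).mpr (by omega)
      have hfP : f (((i % n : ℕ):ℤ), ((m + 1 - 1 - i / n : ℕ):ℤ)) =
          (((i % n : ℕ):ℤ), ((m+1:ℕ):ℤ)-1-((m + 1 - 1 - i / n : ℕ):ℤ)) := by
        have h := htr (((i % n : ℕ):ℤ), ((m + 1 - 1 - i / n : ℕ):ℤ))
        rw [if_pos hu0, if_neg (by omega)] at h
        exact h
      rw [show ((m+1:ℕ):ℤ)-1-((m + 1 - 1 - i / n : ℕ):ℤ) = ((i / n : ℕ):ℤ) from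
        by omega] at hfP
      have hmm := hmemf (((i % n : ℕ):ℤ), ((m + 1 - 1 - i / n : ℕ):ℤ))
      rw [hfP] at hmm
      have heq : lamDC (insert (r.1, (m:ℤ)) (C.erase r)) n (m+1) i
          = lamAB (insert (r.1, (m:ℤ)) (C.erase r)) n i := by
        simp only [lamDC, lamAB]
        exact decide_eq_decide.mpr hmm
      rw [heq, hsi] at hti
      simp at hti
    · exfalso
      obtain ⟨i, hiL, _, hti, hsi⟩ := hBA'
      have hxlt : i % n < n := Nat.mod_lt _ hn0
      have hfP : f (((n - 1 - i % n : ℕ):ℤ), ((i / n : ℕ):ℤ)) =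
          ((n:ℤ)-1-((n - 1 - i % n : ℕ):ℤ), ((i / n : ℕ):ℤ)) := by
        have h := htr (((n - 1 - i % n : ℕ):ℤ), ((i / n : ℕ):ℤ))
        rw [if_neg (by omega), if_pos hv0] at h
        exact h
      rw [show (n:ℤ)-1-((n - 1 - i % n : ℕ):ℤ) = ((i % n : ℕ):ℤ) from by omega] at hfP
      have hmm := hmemf (((n - 1 - i % n : ℕ):ℤ), ((i / n : ℕ):ℤ))
      rw [hfP] at hmm
      have heq : lamBA (insert (r.1, (m:ℤ)) (C.erase r)) n i
          = lamAB (insert (r.1, (m:ℤ)) (C.erase r)) n i := by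
        simp only [lamBA, lamAB]
        exact decide_eq_decide.mpr hmm
      rw [heq, hsi] at hti
      simp at hti
    · exfalso
      obtain ⟨i, hiL, _, hti, hsi⟩ := hCD'
      have hxlt : i % n < n := Nat.mod_lt _ hn0
      have hjlt : i / n < m + 1 := by
        have hcomm : (m+1)*n = n*(m+1) := Nat.mul_comm _ _
        exact (Nat.div_lt_iff_lt_mul hn0).mpr (by omega)
      have hfP : f (((n - 1 - i % n : ℕ):ℤ), ((m + 1 - 1 - i / n : ℕ):ℤ)) =
          ((n:ℤ)-1-((n - 1 - i % n : ℕ):ℤ),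
           ((m+1:ℕ):ℤ)-1-((m + 1 - 1 - i / n : ℕ):ℤ)) := by
        have h := htr (((n - 1 - i % n : ℕ):ℤ), ((m + 1 - 1 - i / n : ℕ):ℤ))
        rw [if_neg (by omega), if_neg (by omega)] at h
        exact h
      rw [show (n:ℤ)-1-((n - 1 - i % n : ℕ):ℤ) = ((i % n : ℕ):ℤ) from by omega,
        show ((m+1:ℕ):ℤ)-1-((m + 1 - 1 - i / n : ℕ):ℤ) = ((i / n : ℕ):ℤ) from
        by omega] at hfP
      have hmm := hmemf (((n - 1 - i % n : ℕ):ℤ), ((m + 1 - 1 - i / n : ℕ):ℤ))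
      rw [hfP] at hmm
      have heq : lamCD (insert (r.1, (m:ℤ)) (C.erase r)) n (m+1) i
          = lamAB (insert (r.1, (m:ℤ)) (C.erase r)) n i := by
        simp only [lamCD, lamAB]
        exact decide_eq_decide.mpr hmm
      rw [heq, hsi] at hti
      simp at hti
  exact ⟨hasy, hBA', hDC', hCD'⟩


end RobotGrid
end

section
/- Let C be an asymmetric configuration with λ_{AB} its unique largest corner string, and let the head be the point of C realizing the first 1 in λ_{AB}. If the head is not located at corner A and moves one grid step toward A along its scan direction (to the immediately preceding position in the λ_{AB} scan, which is unoccupied), then the resulting string λ'_{AB} is lexicographically strictly larger than λ_{AB}, and λ'_{AB} remains the unique largest corner string of the new configuration; in particular the new configuration is asymmetric. -/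
namespace RobotGrid

lemma int_unit (x y : ℤ) (h : x^2 + y^2 = 1) :
    (x = 1 ∧ y = 0) ∨ (x = -1 ∧ y = 0) ∨ (x = 0 ∧ y = 1) ∨ (x = 0 ∧ y = -1) := by
  have hx1 : -1 ≤ x := by nlinarith [sq_nonneg (x+1), sq_nonneg y]
  have hx2 : x ≤ 1 := by nlinarith [sq_nonneg (x-1), sq_nonneg y]
  have hy1 : -1 ≤ y := by nlinarith [sq_nonneg (y+1), sq_nonneg x]
  have hy2 : y ≤ 1 := by nlinarith [sq_nonneg (y-1), sq_nonneg x]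
  interval_cases x <;> interval_cases y <;> simp_all <;> omega

lemma classify (n m : ℕ) (hn : 1 < n) (hnm : n < m)
    (f : ℤ × ℤ → ℤ × ℤ)
    (hiso : ∀ p q, sqdist (f p) (f q) = sqdist p q)
    (hrect : ∀ p, inRect n m p ↔ inRect n m (f p)) :
    (∀ p, inRect n m p → f p = p) ∨
    (∀ p, inRect n m p → f p = ((n:ℤ)-1-p.1, p.2)) ∨
    (∀ p, inRect n m p → f p = (p.1, (m:ℤ)-1-p.2)) ∨
    (∀ p, inRect n m p → f p = ((n:ℤ)-1-p.1, (m:ℤ)-1-p.2)) := by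
  have h1 : sqdist (f ((1:ℤ),(0:ℤ))) (f ((0:ℤ),(0:ℤ))) = 1 := by
    rw [hiso]; norm_num [sqdist]
  have h2 : sqdist (f ((0:ℤ),(1:ℤ))) (f ((0:ℤ),(0:ℤ))) = 1 := by
    rw [hiso]; norm_num [sqdist]
  have h3 : sqdist (f ((1:ℤ),(0:ℤ))) (f ((0:ℤ),(1:ℤ))) = 2 := by
    rw [hiso]; norm_num [sqdist]
  set a := f ((0:ℤ),(0:ℤ)) with ha
  set b := f ((1:ℤ),(0:ℤ)) with hb
  set c := f ((0:ℤ),(1:ℤ)) with hc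
  simp only [sqdist] at h1 h2 h3
  have key : ∀ p : ℤ × ℤ, f p =
      (a.1 + p.1*(b.1-a.1) + p.2*(c.1-a.1), a.2 + p.1*(b.2-a.2) + p.2*(c.2-a.2)) := by
    intro p
    have e1 := hiso p ((0:ℤ),(0:ℤ))
    have e2 := hiso p ((1:ℤ),(0:ℤ))
    have e3 := hiso p ((0:ℤ),(1:ℤ))
    rw [← ha] at e1; rw [← hb] at e2; rw [← hc] at e3
    simp only [sqdist] at e1 e2 e3
    have hs : ((f p).1 - (a.1 + p.1*(b.1-a.1) + p.2*(c.1-a.1)))^2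
        + ((f p).2 - (a.2 + p.1*(b.2-a.2) + p.2*(c.2-a.2)))^2 = 0 := by
      linear_combination (1 - p.1 - p.2) * e1 + p.1 * e2 + p.2 * e3
        + (p.1^2 - p.1 + p.1*p.2) * h1 + (p.2^2 - p.2 + p.1*p.2) * h2 - p.1*p.2 * h3
    have q1 := sq_nonneg ((f p).1 - (a.1 + p.1*(b.1-a.1) + p.2*(c.1-a.1)))
    have q2 := sq_nonneg ((f p).2 - (a.2 + p.1*(b.2-a.2) + p.2*(c.2-a.2)))
    have c1 : (f p).1 = a.1 + p.1*(b.1-a.1) + p.2*(c.1-a.1) := by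
      have : ((f p).1 - (a.1 + p.1*(b.1-a.1) + p.2*(c.1-a.1)))^2 = 0 := by linarith
      have := sq_eq_zero_iff.mp this
      linarith
    have c2 : (f p).2 = a.2 + p.1*(b.2-a.2) + p.2*(c.2-a.2) := by
      have : ((f p).2 - (a.2 + p.1*(b.2-a.2) + p.2*(c.2-a.2)))^2 = 0 := by linarith
      have := sq_eq_zero_iff.mp this
      linarith
    exact Prod.ext c1 c2
  have horth : 2*((b.1-a.1)*(c.1-a.1) + (b.2-a.2)*(c.2-a.2)) = 0 := by
    linear_combination h1 + h2 - h3
  have r0 : inRect n m ((0:ℤ),(0:ℤ)) := by simp only [inRect]; constructor <;> simp <;> omega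
  have rN : inRect n m (((n:ℤ)-1),(0:ℤ)) := by
    simp only [inRect]; refine ⟨by omega, by omega, by omega, by omega⟩
  have rM : inRect n m ((0:ℤ),((m:ℤ)-1)) := by
    simp only [inRect]; refine ⟨by omega, by omega, by omega, by omega⟩
  have i0 := (hrect _).mp r0
  have iN := (hrect _).mp rN
  have iM := (hrect _).mp rM
  rw [key _] at iN iM
  rw [← ha] at i0
  simp only [inRect] at i0 iN iM
  rcases int_unit _ _ h1 with ⟨hb1,hb2⟩|⟨hb1,hb2⟩|⟨hb1,hb2⟩|⟨hb1,hb2⟩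
  · rcases int_unit _ _ h2 with ⟨hc1,hc2⟩|⟨hc1,hc2⟩|⟨hc1,hc2⟩|⟨hc1,hc2⟩ <;>
      rw [hb1, hb2, hc1, hc2] at horth iN iM
    · omega
    · omega
    · refine  Or.inl ?_
      intro p hp
      obtain ⟨p1, p2⟩ := p
      rw [key (p1, p2), hb1, hb2, hc1, hc2]
      simp only [Prod.mk.injEq]
      constructor <;> omega
    · refine  Or.inr (Or.inr (Or.inl ?_))
      intro p hp
      obtain ⟨p1, p2⟩ := p
      rw [key (p1, p2), hb1, hb2, hc1, hc2]
      simp only [Prod.mk.injEq]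
      constructor <;> omega
  · rcases int_unit _ _ h2 with ⟨hc1,hc2⟩|⟨hc1,hc2⟩|⟨hc1,hc2⟩|⟨hc1,hc2⟩ <;>
      rw [hb1, hb2, hc1, hc2] at horth iN iM
    · omega
    · omega
    · refine  Or.inr (Or.inl ?_)
      intro p hp
      obtain ⟨p1, p2⟩ := p
      rw [key (p1, p2), hb1, hb2, hc1, hc2]
      simp only [Prod.mk.injEq]
      constructor <;> omega
    · refine  Or.inr (Or.inr (Or.inr ?_))
      intro p hp
      obtain ⟨p1, p2⟩ := p
      rw [key (p1, p2), hb1, hb2, hc1, hc2]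
      simp only [Prod.mk.injEq]
      constructor <;> omega
  · rcases int_unit _ _ h2 with ⟨hc1,hc2⟩|⟨hc1,hc2⟩|⟨hc1,hc2⟩|⟨hc1,hc2⟩ <;>
      rw [hb1, hb2, hc1, hc2] at horth iN iM
    · exfalso; omega
    · exfalso; omega
    · omega
    · omega
  · rcases int_unit _ _ h2 with ⟨hc1,hc2⟩|⟨hc1,hc2⟩|⟨hc1,hc2⟩|⟨hc1,hc2⟩ <;>
      rw [hb1, hb2, hc1, hc2] at horth iN iM
    · exfalso; omega
    · exfalso; omega
    · omega
    · omega

lemma lexGT_prefix {L K : ℕ} {s t : ℕ → Bool} (h : LexGT L s t)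
    (hs : ∀ j, j < K → s j = false) : ∀ j, j < K → t j = false := by
  obtain ⟨i, hiL, heq, hti, hsi⟩ := h
  intro j hj
  have hik : K ≤ i := by
    by_contra hc
    exact absurd hsi (by simp [hs i (by omega)])
  rw [← heq j (by omega)]
  exact hs j hj

lemma scanPos_inj {n : ℕ} {j k : ℕ} (h : scanPos n j = scanPos n k) : j = k := by
  simp only [scanPos, Prod.mk.injEq, Nat.cast_inj] at h
  conv_lhs => rw [← Nat.div_add_mod j n]
  conv_rhs => rw [← Nat.div_add_mod k n]
  rw [h.1, h.2]

/-- if the head (the point realizing the first 1 of the unique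
largest corner string `λ_{AB}`) is not at corner `A` and moves to the
immediately preceding (unoccupied) position of the `λ_{AB}` scan, without
changing the smallest enclosing rectangle, then the new string `λ'_{AB}` is
strictly lexicographically larger than `λ_{AB}`, remains the unique largest
corner string, and the new configuration is asymmetric. -/
theorem head_move_increases_string
    (C : Finset (ℤ × ℤ)) (n m : ℕ) (hn : 1 < n) (hnm : n < m)
    (hser : IsSER C n m) (hasym : Asymmetric n m C)
    (hBA : LexGT (n * m) (lamAB C n) (lamBA C n))
    (hDC : LexGT (n * m) (lamAB C n) (lamDC C n m))
    (hCD : LexGT (n * m) (lamAB C n) (lamCD C n m))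
    (k : ℕ) (hk0 : 0 < k) (hk : k < n * m)
    (hhmem : scanPos n k ∈ C)
    (hhead : ∀ p ∈ C, p ≠ scanPos n k → p.2 * n + p.1 > ((k : ℤ)))
    (hprev : scanPos n (k - 1) ∉ C)
    (hser' : IsSER (insert (scanPos n (k - 1)) (C.erase (scanPos n k))) n m) :
    LexGT (n * m) (lamAB (insert (scanPos n (k - 1)) (C.erase (scanPos n k))) n)
      (lamAB C n) ∧
    LexGT (n * m) (lamAB (insert (scanPos n (k - 1)) (C.erase (scanPos n k))) n)
      (lamBA (insert (scanPos n (k - 1)) (C.erase (scanPos n k))) n) ∧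
    LexGT (n * m) (lamAB (insert (scanPos n (k - 1)) (C.erase (scanPos n k))) n)
      (lamDC (insert (scanPos n (k - 1)) (C.erase (scanPos n k))) n m) ∧
    LexGT (n * m) (lamAB (insert (scanPos n (k - 1)) (C.erase (scanPos n k))) n)
      (lamCD (insert (scanPos n (k - 1)) (C.erase (scanPos n k))) n m) ∧
    Asymmetric n m (insert (scanPos n (k - 1)) (C.erase (scanPos n k))) := by
  have hn0 : 0 < n := by omega
  set C' := insert (scanPos n (k - 1)) (C.erase (scanPos n k)) with hC'
  -- k < n
  have hkn : k < n := by
    obtain ⟨p, hpC, hp2⟩ := hser.2.2.2.1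
    by_cases hph : p = scanPos n k
    · rw [hph] at hp2
      simp only [scanPos] at hp2
      have h0 : k / n = 0 := by exact_mod_cast hp2
      have hdm := Nat.div_add_mod k n
      rw [h0] at hdm
      have hmlt := Nat.mod_lt k hn0
      omega
    · have hgt := hhead p hpC hph
      rw [hp2] at hgt
      have hlt := (hser.1 p hpC).2.1
      simp only [zero_mul, zero_add] at hgt
      omega
  have hHpt : scanPos n k = (((k:ℕ):ℤ), ((0:ℕ):ℤ)) := by
    simp [scanPos, Nat.mod_eq_of_lt hkn, Nat.div_eq_of_lt hkn]
  have hABf : ∀ j, j < k → lamAB C n j = false := by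
    intro j hj
    simp only [lamAB, decide_eq_false_iff_not]
    intro hmem
    have hne : scanPos n j ≠ scanPos n k := fun he => absurd (scanPos_inj he) (by omega)
    have hgt := hhead _ hmem hne
    simp only [scanPos] at hgt
    have hj2 : j / n * n + j % n = j := Nat.div_add_mod' j n
    have : ((j / n * n + j % n : ℕ) : ℤ) > (k : ℤ) := by push_cast at hgt ⊢; linarith
    rw [hj2] at this
    exact absurd (by exact_mod_cast this) (by omega)
  have hBAf := lexGT_prefix hBA hABf
  have hDCf := lexGT_prefix hDC hABf
  have hCDf := lexGT_prefix hCD hABf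
  have h2k : 2 * k + 1 ≤ n := by
    by_contra hc
    have hj : n - 1 - k < k := by omega
    have hfalse := hBAf (n - 1 - k) hj
    simp only [lamBA, decide_eq_false_iff_not] at hfalse
    apply hfalse
    have e1 : (n - 1 - k) % n = n - 1 - k := Nat.mod_eq_of_lt (by omega)
    have e2 : (n - 1 - k) / n = 0 := Nat.div_eq_of_lt (by omega)
    rw [e1, e2]
    have e3 : n - 1 - (n - 1 - k) = k := by omega
    rw [e3, ← hHpt]
    exact hhmem
  have hmemC' : ∀ p : ℤ × ℤ, p ∈ C' ↔ p = scanPos n (k - 1) ∨ (p ∈ C ∧ p ≠ scanPos n k) := by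
    intro p
    simp only [hC', Finset.mem_insert, Finset.mem_erase]
    tauto
  have hAB'f : ∀ j, j < k - 1 → lamAB C' n j = false := by
    intro j hj
    simp only [lamAB, decide_eq_false_iff_not]
    intro hmem
    rcases (hmemC' (scanPos n j)).mp hmem with he | ⟨hmC, _⟩
    · exact absurd (scanPos_inj he) (by omega)
    · have := hABf j (by omega)
      simp only [lamAB, decide_eq_false_iff_not] at this
      exact this hmC
  have hAB't : lamAB C' n (k - 1) = true := by
    simp only [lamAB, decide_eq_true_eq]
    exact (hmemC' (scanPos n (k - 1))).mpr (Or.inl rfl)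
  have hBA'f : ∀ j, j ≤ k - 1 → lamBA C' n j = false := by
    intro j hj
    simp only [lamBA, decide_eq_false_iff_not]
    intro hmem
    rcases (hmemC' _).mp hmem with he | ⟨hmC, _⟩
    · have h1 : ((n - 1 - j % n : ℕ) : ℤ) = (((k - 1) % n : ℕ) : ℤ) := congrArg Prod.fst he
      have h1' : n - 1 - j % n = (k - 1) % n := by exact_mod_cast h1
      have e : j % n = j := Nat.mod_eq_of_lt (by omega)
      have e2 : (k - 1) % n = k - 1 := Nat.mod_eq_of_lt (by omega)
      omega
    · have := hBAf j (by omega)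
      simp only [lamBA, decide_eq_false_iff_not] at this
      exact this hmC
  have hDC'f : ∀ j, j ≤ k - 1 → lamDC C' n m j = false := by
    intro j hj
    simp only [lamDC, decide_eq_false_iff_not]
    intro hmem
    rcases (hmemC' _).mp hmem with he | ⟨hmC, _⟩
    · have h2 : ((m - 1 - j / n : ℕ) : ℤ) = (((k - 1) / n : ℕ) : ℤ) := congrArg Prod.snd he
      have h2' : m - 1 - j / n = (k - 1) / n := by exact_mod_cast h2
      have e : j / n = 0 := Nat.div_eq_of_lt (by omega)
      have e2 : (k - 1) / n = 0 := Nat.div_eq_of_lt (by omega)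
      omega
    · have := hDCf j (by omega)
      simp only [lamDC, decide_eq_false_iff_not] at this
      exact this hmC
  have hCD'f : ∀ j, j ≤ k - 1 → lamCD C' n m j = false := by
    intro j hj
    simp only [lamCD, decide_eq_false_iff_not]
    intro hmem
    rcases (hmemC' _).mp hmem with he | ⟨hmC, _⟩
    · have h2 : ((m - 1 - j / n : ℕ) : ℤ) = (((k - 1) / n : ℕ) : ℤ) := congrArg Prod.snd he
      have h2' : m - 1 - j / n = (k - 1) / n := by exact_mod_cast h2
      have e : j / n = 0 := Nat.div_eq_of_lt (by omega)
      have e2 : (k - 1) / n = 0 := Nat.div_eq_of_lt (by omega)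
      omega
    · have := hCDf j (by omega)
      simp only [lamCD, decide_eq_false_iff_not] at this
      exact this hmC
  have hABk1 : lamAB C n (k - 1) = false := by
    simp only [lamAB, decide_eq_false_iff_not]
    exact fun h => hprev h
  have G1 : LexGT (n * m) (lamAB C' n) (lamAB C n) :=
    ⟨k - 1, by omega, fun j hj => by rw [hAB'f j hj, hABf j (by omega)], hABk1, hAB't⟩
  have G2 : LexGT (n * m) (lamAB C' n) (lamBA C' n) :=
    ⟨k - 1, by omega, fun j hj => by rw [hAB'f j hj, hBA'f j (by omega)],
      hBA'f (k - 1) le_rfl, hAB't⟩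
  have G3 : LexGT (n * m) (lamAB C' n) (lamDC C' n m) :=
    ⟨k - 1, by omega, fun j hj => by rw [hAB'f j hj, hDC'f j (by omega)],
      hDC'f (k - 1) le_rfl, hAB't⟩
  have G4 : LexGT (n * m) (lamAB C' n) (lamCD C' n m) :=
    ⟨k - 1, by omega, fun j hj => by rw [hAB'f j hj, hCD'f j (by omega)],
      hCD'f (k - 1) le_rfl, hAB't⟩
  refine ⟨G1, G2, G3, G4, ?_⟩
  intro f hf p hp
  obtain ⟨hbij, hiso, hrect, hmemf⟩ := hf
  have hspr : ∀ i, i < n * m → inRect n m (scanPos n i) := by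
    intro i hi
    have hmlt := Nat.mod_lt i hn0
    have hdlt : i / n < m := (Nat.div_lt_iff_lt_mul hn0).mpr (by rwa [Nat.mul_comm n m] at hi)
    simp only [inRect, scanPos]
    exact ⟨Int.natCast_nonneg _, by exact_mod_cast hmlt, Int.natCast_nonneg _,
      by exact_mod_cast hdlt⟩
  rcases classify n m hn hnm f hiso hrect with hid | hH | hV | hHV
  · exact hid p hp
  · exfalso
    obtain ⟨i, hiL, heq, hti, hsi⟩ := G2
    have hsp := hspr i hiL
    have hfsp := hH _ hsp
    have hmlt := Nat.mod_lt i hn0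
    have hteq : ((((n - 1 - i % n : ℕ) : ℤ)), ((i / n : ℕ) : ℤ)) = f (scanPos n i) := by
      rw [hfsp]
      exact Prod.ext (by simp only [scanPos]; omega) rfl
    have hiff : ((((n - 1 - i % n : ℕ) : ℤ)), ((i / n : ℕ) : ℤ)) ∈ C' ↔ scanPos n i ∈ C' := by
      rw [hteq]
      exact (hmemf (scanPos n i)).symm
    have : lamBA C' n i = lamAB C' n i := by
      simp only [lamBA, lamAB]
      exact decide_eq_decide.mpr hiff
    rw [hti, hsi] at this
    exact absurd this (by simp)
  · exfalso
    obtain ⟨i, hiL, heq, hti, hsi⟩ := G3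
    have hsp := hspr i hiL
    have hfsp := hV _ hsp
    have hdlt : i / n < m := (Nat.div_lt_iff_lt_mul hn0).mpr (by rwa [Nat.mul_comm n m] at hiL)
    have hteq : ((((i % n : ℕ) : ℤ)), ((m - 1 - i / n : ℕ) : ℤ)) = f (scanPos n i) := by
      rw [hfsp]
      exact Prod.ext rfl (by simp only [scanPos]; omega)
    have hiff : ((((i % n : ℕ) : ℤ)), ((m - 1 - i / n : ℕ) : ℤ)) ∈ C' ↔ scanPos n i ∈ C' := by
      rw [hteq]
      exact (hmemf (scanPos n i)).symm
    have : lamDC C' n m i = lamAB C' n i := by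
      simp only [lamDC, lamAB]
      exact decide_eq_decide.mpr hiff
    rw [hti, hsi] at this
    exact absurd this (by simp)
  · exfalso
    obtain ⟨i, hiL, heq, hti, hsi⟩ := G4
    have hsp := hspr i hiL
    have hfsp := hHV _ hsp
    have hmlt := Nat.mod_lt i hn0
    have hdlt : i / n < m := (Nat.div_lt_iff_lt_mul hn0).mpr (by rwa [Nat.mul_comm n m] at hiL)
    have hteq : ((((n - 1 - i % n : ℕ) : ℤ)), ((m - 1 - i / n : ℕ) : ℤ)) = f (scanPos n i) := by
      rw [hfsp]
      exact Prod.ext (by simp only [scanPos]; omega) (by simp only [scanPos]; omega)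
    have hiff : ((((n - 1 - i % n : ℕ) : ℤ)), ((m - 1 - i / n : ℕ) : ℤ)) ∈ C' ↔ scanPos n i ∈ C' := by
      rw [hteq]
      exact (hmemf (scanPos n i)).symm
    have : lamCD C' n m i = lamAB C' n i := by
      simp only [lamCD, lamAB]
      exact decide_eq_decide.mpr hiff
    rw [hti, hsi] at this
    exact absurd this (by simp)

end RobotGrid
end
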